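/- arXiv:2212.08707 — 7 statements merged into one kernel-verified Lean document; each statement's English description precedes it below -/
import Mathlib

section
/- Let T be a tree containing more than one point that is 1-bounded turning and D-doubling, let B = B(T) be its branch set, L = L(T) its leaf set, and L̄ the closure of L in T (which is nonempty). Then the image [B ∪ L̄] of B ∪ L̄ in the metric quotient T/L̄ is (1/(8D²))-uniformly disconnected; that is, there is no finite sequence x_0, …, x_n of points of B ∪ L̄ such that ρ([x_0],[x_n]) > 0 and ρ([x_i],[x_{i+1}]) ≤ (1/(8D²))·ρ([x_0],[x_n]) for all 0 ≤ i < n, where ρ is the quotient metric of T/L̄. -/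
/-!
Suppose `x₀, …, xₙ` were a relative chain with quotient steps at most `s = d/(8D²)`, where
`d = ρ(x₀, xₙ)`, and (reversing it if needed) with `x₀` at distance at least `d/2` from `L̄`.
While the chain stays `2s`-far from `L̄`, its quotient steps are genuine steps and its points are
branch points; this initial stretch travels at least `d/2 - 3s`. The first chain points beyond
distance `k s` from `x₀`, for `k ≤ K ≈ 2D²`, are then `K` branch points within `d/4` of `x₀`.
Ordered by separation from `x₀` they form a finite forest, and at least half of them have a branch
containing neither `x₀` nor any of the other points. Such a branch contains a leaf, hence a point
at distance exactly `d/2` from `x₀`. By 1-bounded turning these points are pairwise more than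
`d/4` apart, so together with `x₀` they are more than `D²` separated points in a ball of radius
`d/2`, contradicting the doubling property.
-/

open Metric Set

namespace Paper

/-- `A` is a Jordan arc in `X` with endpoints `x` and `y`
(with the convention that the degenerate arc `[x,x]` is `{x}`). -/
def IsArcWithEndpoints {X : Type*} [TopologicalSpace X] (A : Set X) (x y : X) : Prop :=
  (x = y ∧ A = {x}) ∨
  ∃ γ : Set.Icc (0:ℝ) 1 → X, Topology.IsEmbedding γ ∧ Set.range γ = A ∧
    γ ⟨0, by norm_num⟩ = x ∧ γ ⟨1, by norm_num⟩ = y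

/-- A metric tree: compact, connected, locally connected, and any two distinct
points are the endpoints of a unique Jordan arc. -/
def IsTree (T : Type*) [MetricSpace T] : Prop :=
  CompactSpace T ∧ ConnectedSpace T ∧ LocallyConnectedSpace T ∧
    ∀ x y : T, x ≠ y → ∃! A : Set T, IsArcWithEndpoints A x y

/-- `C`-bounded turning metric space. -/
def BoundedTurning (C : ℝ) (X : Type*) [MetricSpace X] : Prop :=
  ∀ u v : X, ∃ E : Set X, IsCompact E ∧ IsConnected E ∧ u ∈ E ∧ v ∈ E ∧
    Metric.diam E ≤ C * dist u v

/-- `D`-doubling metric space: every ball of radius `r` is covered by at most `D`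
balls of radius `r/2`. -/
def Doubling (D : ℝ) (X : Type*) [MetricSpace X] : Prop :=
  ∀ (x : X) (r : ℝ), 0 < r →
    ∃ F : Finset X, (F.card : ℝ) ≤ D ∧ Metric.ball x r ⊆ ⋃ y ∈ F, Metric.ball y (r / 2)

/-- The leaf set of `T`: points whose complement is connected. -/
def leafSet (T : Type*) [MetricSpace T] : Set T :=
  {p | IsConnected ({p}ᶜ : Set T)}

/-- The branch set of `T`: points whose complement has at least three connected
components. -/
def branchSet (T : Type*) [MetricSpace T] : Set T :=
  {p | ∃ x ∈ ({p}ᶜ : Set T), ∃ y ∈ ({p}ᶜ : Set T), ∃ z ∈ ({p}ᶜ : Set T),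
    connectedComponentIn ({p}ᶜ) x ≠ connectedComponentIn ({p}ᶜ) y ∧
    connectedComponentIn ({p}ᶜ) x ≠ connectedComponentIn ({p}ᶜ) z ∧
    connectedComponentIn ({p}ᶜ) y ≠ connectedComponentIn ({p}ᶜ) z}

/-- The quotient distance of the metric quotient `X/E`, computed on representatives. -/
noncomputable def qdist {X : Type*} [MetricSpace X] (E : Set X) (a b : X) : ℝ :=
  min (dist a b) (infDist a E + infDist b E)

/-- The restriction of `f` to `S` is `Q`-light: for every `r > 0` and every `E` of
diameter at most `r`, every `r`-chain contained in `S ∩ f ⁻¹' E` has diameter at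
most `Q * r`. -/
def IsLightOn {X Y : Type*} [MetricSpace X] [MetricSpace Y] (Q : ℝ) (f : X → Y)
    (S : Set X) : Prop :=
  ∀ r : ℝ, 0 < r → ∀ E : Set Y, Metric.diam E ≤ r →
    ∀ (n : ℕ) (z : Fin (n + 1) → X), (∀ i, z i ∈ S) → (∀ i, f (z i) ∈ E) →
      (∀ i : Fin n, dist (z i.castSucc) (z i.succ) ≤ r) →
      ∀ i j, dist (z i) (z j) ≤ Q * r

/-- `f` is `Q`-light. -/
def IsLight {X Y : Type*} [MetricSpace X] [MetricSpace Y] (Q : ℝ) (f : X → Y) : Prop :=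
  IsLightOn Q f Set.univ

/-- A function `g` on `X`, constant on `M` (hence descending to the metric quotient
`X/M`), is `Q`-light as a map on the quotient: chains and diameters are measured
with the quotient distance `qdist M`. -/
def IsQuotLight {X : Type*} [MetricSpace X] (Q : ℝ) (M : Set X) (g : X → ℝ) : Prop :=
  ∀ r : ℝ, 0 < r → ∀ E : Set ℝ, Metric.diam E ≤ r →
    ∀ (n : ℕ) (z : Fin (n + 1) → X), (∀ i, g (z i) ∈ E) →
      (∀ i : Fin n, qdist M (z i.castSucc) (z i.succ) ≤ r) →
      ∀ i j, qdist M (z i) (z j) ≤ Q * r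

/-- `S` is `α`-uniformly disconnected: it contains no nondegenerate relative `α`-chain. -/
def UniformlyDisconnected {X : Type*} [MetricSpace X] (α : ℝ) (S : Set X) : Prop :=
  ¬ ∃ (n : ℕ) (z : Fin (n + 1) → X), (∀ i, z i ∈ S) ∧ z 0 ≠ z (Fin.last n) ∧
      ∀ i : Fin n, dist (z i.castSucc) (z i.succ) ≤ α * dist (z 0) (z (Fin.last n))

/-- `N` is an `ε`-Whitney net in `B` with respect to `A`. -/
def IsWhitneyNet {X : Type*} [MetricSpace X] (ε : ℝ) (A B N : Set X) : Prop :=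
  N ⊆ B \ A ∧
  (∀ u ∈ N, ∀ v ∈ N, u ≠ v → ε * max (infDist u A) (infDist v A) ≤ dist u v) ∧
  ∀ N' : Set X, N ⊆ N' → N' ⊆ B \ A →
    (∀ u ∈ N', ∀ v ∈ N', u ≠ v → ε * max (infDist u A) (infDist v A) ≤ dist u v) →
    N' = N

end Paper

open scoped Finset

section ComplSingleton

variable {X : Type*} [TopologicalSpace X] {p a b : X}

theorem connectedComponentIn_compl_singleton_eq_of_isPreconnected {E : Set X}
    (hE : IsPreconnected E) (ha : a ∈ E) (hb : b ∈ E) (hp : p ∉ E) :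
    connectedComponentIn {p}ᶜ a = connectedComponentIn {p}ᶜ b :=
  connectedComponentIn_eq <|
    hE.subset_connectedComponentIn ha (fun z hz (hzp : z = p) => hp (hzp ▸ hz)) hb

theorem connectedComponentIn_compl_singleton_eq_of_continuous {c : ℝ → X} (hc : Continuous c)
    {s t : ℝ} (hp : p ∉ c '' Icc s t) (hst : s ≤ t) :
    connectedComponentIn {p}ᶜ (c s) = connectedComponentIn {p}ᶜ (c t) :=
  connectedComponentIn_compl_singleton_eq_of_isPreconnected
    (isPreconnected_Icc.image c hc.continuousOn)
    (mem_image_of_mem c (left_mem_Icc.2 hst)) (mem_image_of_mem c (right_mem_Icc.2 hst)) hp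

variable [T1Space X] [LocallyConnectedSpace X]

theorem mem_connectedComponentIn_of_mem_closure {q v : X}
    (hq : q ∈ closure (connectedComponentIn {p}ᶜ v)) (hqp : q ≠ p) :
    q ∈ connectedComponentIn {p}ᶜ v := by
  have hq' : q ∈ connectedComponentIn {p}ᶜ q := mem_connectedComponentIn hqp
  obtain ⟨z, hzq, hzv⟩ := mem_closure_iff.1 hq _ isOpen_compl_singleton.connectedComponentIn hq'
  rwa [connectedComponentIn_eq hzv, ← connectedComponentIn_eq hzq]

variable [ConnectedSpace X]

theorem mem_closure_connectedComponentIn_compl_singleton {v : X} (hv : v ≠ p) :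
    p ∈ closure (connectedComponentIn {p}ᶜ v) := by
  by_contra hp
  have hclosed : IsClosed (connectedComponentIn {p}ᶜ v) :=
    isClosed_of_closure_subset fun q hq =>
      mem_connectedComponentIn_of_mem_closure hq fun hqp => hp (hqp ▸ hq)
  have huniv := IsClopen.eq_univ ⟨hclosed, isOpen_compl_singleton.connectedComponentIn⟩
    ⟨v, mem_connectedComponentIn hv⟩
  exact (connectedComponentIn_subset _ _ (huniv ▸ mem_univ p) : p ∉ {p}) rfl

theorem connectedComponentIn_compl_singleton_eq_of_mem {q w u : X} (hw : w ≠ q)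
    (hu : u ∈ connectedComponentIn {q}ᶜ w) (hp : p ∉ connectedComponentIn {q}ᶜ w) (hpq : p ≠ q) :
    connectedComponentIn {p}ᶜ u = connectedComponentIn {p}ᶜ q :=
  connectedComponentIn_compl_singleton_eq_of_isPreconnected
    isPreconnected_connectedComponentIn.closure
    (subset_closure hu) (mem_closure_connectedComponentIn_compl_singleton hw)
    fun h => hp (mem_connectedComponentIn_of_mem_closure h hpq)

theorem connectedComponentIn_compl_singleton_subset {q w u : X} (hw : w ≠ q)
    (hp : p ∉ connectedComponentIn {q}ᶜ w) (hpq : p ≠ q) (hq : q ∈ connectedComponentIn {p}ᶜ u) :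
    connectedComponentIn {q}ᶜ w ⊆ connectedComponentIn {p}ᶜ u := by
  intro z hz
  have hzp : z ≠ p := fun e => hp (e ▸ hz)
  rw [connectedComponentIn_eq hq, ← connectedComponentIn_compl_singleton_eq_of_mem hw hz hp hpq]
  exact mem_connectedComponentIn hzp

end ComplSingleton

section ForestCount

variable {ι β : Type*} {lt : ι → ι → Prop} {cls : ι → ι → β}

/-- `lt` is a strict order whose down-sets are chains, and `cls x y` records the direction in
which `y` lies above `x`; comparable elements above `x` lie in the same direction. -/
structure IsForestOrder (lt : ι → ι → Prop) (cls : ι → ι → β) : Prop where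
  asymm : ∀ x y, lt x y → ¬ lt y x
  trans : ∀ x y z, lt x y → lt y z → lt x z
  down : ∀ x y z, lt x z → lt y z → lt x y ∨ lt y x ∨ x = y
  cls_eq : ∀ x y z, lt x y → lt x z → (lt y z ∨ lt z y ∨ y = z) → cls x y = cls x z

variable (lt cls) in
open Classical in
noncomputable def branchingNodes (Q : Finset ι) : Finset ι :=
  {x ∈ Q | ∃ y ∈ Q, ∃ z ∈ Q, lt x y ∧ lt x z ∧ cls x y ≠ cls x z}

variable (lt) in
open Classical in
noncomputable def maximalNodes (Q : Finset ι) : Finset ι :=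
  {x ∈ Q | ∀ y ∈ Q, ¬ lt x y}

variable (lt cls) in
open Classical in
noncomputable def newDirectionNodes (Q : Finset ι) (m : ι) : Finset ι :=
  {a ∈ Q | lt a m ∧ (∀ y ∈ Q, ∀ z ∈ Q, lt a y → lt a z → cls a y = cls a z) ∧
    ∀ w ∈ Q, lt a w → cls a w ≠ cls a m}

theorem mem_branchingNodes {Q : Finset ι} {x : ι} : x ∈ branchingNodes lt cls Q ↔
    x ∈ Q ∧ ∃ y ∈ Q, ∃ z ∈ Q, lt x y ∧ lt x z ∧ cls x y ≠ cls x z := by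
  classical
  simp only [branchingNodes, Finset.mem_filter]

theorem mem_maximalNodes {Q : Finset ι} {x : ι} :
    x ∈ maximalNodes lt Q ↔ x ∈ Q ∧ ∀ y ∈ Q, ¬ lt x y := by
  classical
  simp only [maximalNodes, Finset.mem_filter]

theorem mem_newDirectionNodes {Q : Finset ι} {m a : ι} : a ∈ newDirectionNodes lt cls Q m ↔
    a ∈ Q ∧ lt a m ∧ (∀ y ∈ Q, ∀ z ∈ Q, lt a y → lt a z → cls a y = cls a z) ∧
      ∀ w ∈ Q, lt a w → cls a w ≠ cls a m := by
  classical
  simp only [newDirectionNodes, Finset.mem_filter]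

namespace IsForestOrder

theorem exists_mem_maximalNodes (h : IsForestOrder lt cls) {Q : Finset ι} (hQ : Q.Nonempty) :
    ∃ m, m ∈ maximalNodes lt Q := by
  classical
  obtain ⟨m, hm, hmax⟩ := Q.exists_max_image (fun x => #{y ∈ Q | lt y x}) hQ
  refine ⟨m, mem_maximalNodes.2 ⟨hm, fun y hy hmy => (hmax y hy).not_gt (Finset.card_lt_card ?_)⟩⟩
  refine (Finset.ssubset_iff_of_subset fun z hz => ?_).2
    ⟨m, Finset.mem_filter.2 ⟨hm, hmy⟩, fun hmm => h.asymm m m (Finset.mem_filter.1 hmm).2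
      (Finset.mem_filter.1 hmm).2⟩
  simp only [Finset.mem_filter] at hz ⊢
  exact ⟨hz.1, h.trans z m y hz.2 hmy⟩

theorem card_newDirectionNodes_le_one (h : IsForestOrder lt cls) (Q : Finset ι) (m : ι) :
    #(newDirectionNodes lt cls Q m) ≤ 1 := by
  refine Finset.card_le_one.2 fun a ha b hb => by_contra fun hab => ?_
  obtain ⟨haQ, ham, -, ha⟩ := mem_newDirectionNodes.1 ha
  obtain ⟨hbQ, hbm, -, hb⟩ := mem_newDirectionNodes.1 hb
  rcases h.down a b m ham hbm with hlt | hlt | e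
  · exact ha b hbQ hlt (h.cls_eq a b m hlt ham (Or.inl hbm))
  · exact hb a haQ hlt (h.cls_eq b a m hlt hbm (Or.inl ham))
  · exact hab e

theorem branchingNodes_subset_union [DecidableEq ι] {Q : Finset ι} {m : ι}
    (hm : m ∈ maximalNodes lt Q) :
    branchingNodes lt cls Q ⊆ branchingNodes lt cls (Q.erase m) ∪
      (newDirectionNodes lt cls (Q.erase m) m \ maximalNodes lt (Q.erase m)) := by
  intro x hx
  obtain ⟨hxQ, y, hyQ, z, hzQ, hxy, hxz, hyz⟩ := mem_branchingNodes.1 hx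
  have hxQ' : x ∈ Q.erase m :=
    Finset.mem_erase.2 ⟨fun e => (mem_maximalNodes.1 hm).2 y hyQ (e ▸ hxy), hxQ⟩
  by_cases hx' : x ∈ branchingNodes lt cls (Q.erase m)
  · exact Finset.mem_union_left _ hx'
  have hgood : ∀ y ∈ Q.erase m, ∀ z ∈ Q.erase m, lt x y → lt x z → cls x y = cls x z :=
    fun y hy z hz hxy hxz => by_contra fun hne =>
      hx' (mem_branchingNodes.2 ⟨hxQ', y, hy, z, hz, hxy, hxz, hne⟩)
  have key : ∀ y ∈ Q, lt x y → cls x y ≠ cls x m → lt x m →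
      x ∈ newDirectionNodes lt cls (Q.erase m) m \ maximalNodes lt (Q.erase m) := by
    intro y hyQ hxy hym hxm
    have hyQ' : y ∈ Q.erase m := Finset.mem_erase.2 ⟨fun e => hym (e ▸ rfl), hyQ⟩
    exact Finset.mem_sdiff.2 ⟨mem_newDirectionNodes.2 ⟨hxQ', hxm, hgood,
      fun w hw hxw => hgood w hw y hyQ' hxw hxy ▸ hym⟩,
      fun hmax => (mem_maximalNodes.1 hmax).2 y hyQ' hxy⟩
  refine Finset.mem_union_right _ ?_
  by_cases hzm : z = m
  · exact key y hyQ hxy (hzm ▸ hyz) (hzm ▸ hxz)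
  by_cases hym : y = m
  · exact key z hzQ hxz (hym ▸ Ne.symm hyz) (hym ▸ hxy)
  exact absurd (hgood y (Finset.mem_erase.2 ⟨hym, hyQ⟩) z (Finset.mem_erase.2 ⟨hzm, hzQ⟩)
    hxy hxz) hyz

variable (lt cls) in
theorem maximalNodes_erase_subset_union [DecidableEq ι] (Q : Finset ι) (m : ι) :
    maximalNodes lt (Q.erase m) ⊆ (maximalNodes lt Q).erase m ∪
      (newDirectionNodes lt cls (Q.erase m) m ∩ maximalNodes lt (Q.erase m)) := by
  intro z hz
  obtain ⟨hzQ', hzmax⟩ := mem_maximalNodes.1 hz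
  obtain ⟨hzm, hzQ⟩ := Finset.mem_erase.1 hzQ'
  by_cases hzm' : lt z m
  · exact Finset.mem_union_right _ (Finset.mem_inter.2 ⟨mem_newDirectionNodes.2
      ⟨hzQ', hzm', fun y hy _ _ hzy => absurd hzy (hzmax y hy),
        fun w hw hzw => absurd hzw (hzmax w hw)⟩, hz⟩)
  refine Finset.mem_union_left _
    (Finset.mem_erase.2 ⟨hzm, mem_maximalNodes.2 ⟨hzQ, fun y hy => ?_⟩⟩)
  by_cases hym : y = m
  · exact hym ▸ hzm'
  · exact hzmax y (Finset.mem_erase.2 ⟨hym, hy⟩)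

/-- When the maximal node `m` is removed, at most one node (lying below `m`) stops branching or
becomes maximal. -/
theorem card_branchingNodes_add_card_maximalNodes_erase_le [DecidableEq ι]
    (h : IsForestOrder lt cls) {Q : Finset ι} {m : ι} (hm : m ∈ maximalNodes lt Q) :
    #(branchingNodes lt cls Q) + #(maximalNodes lt (Q.erase m)) ≤
      #(branchingNodes lt cls (Q.erase m)) + #(maximalNodes lt Q) := by
  have h1 := (Finset.card_le_card (branchingNodes_subset_union (cls := cls) hm)).trans
    (Finset.card_union_le _ _)
  have h2 := (Finset.card_le_card (maximalNodes_erase_subset_union lt cls Q m)).trans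
    (Finset.card_union_le _ _)
  have h3 := Finset.card_sdiff_add_card_inter (newDirectionNodes lt cls (Q.erase m) m)
    (maximalNodes lt (Q.erase m))
  have h4 := Finset.card_erase_add_one hm
  have h5 := h.card_newDirectionNodes_le_one (Q.erase m) m
  omega

theorem card_branchingNodes_add_one_le (h : IsForestOrder lt cls) {Q : Finset ι}
    (hQ : Q.Nonempty) : #(branchingNodes lt cls Q) + 1 ≤ #(maximalNodes lt Q) := by
  classical
  induction Q using Finset.strongInduction with
  | H Q ih =>
    obtain ⟨m, hm⟩ := h.exists_mem_maximalNodes hQ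
    have hstep := h.card_branchingNodes_add_card_maximalNodes_erase_le hm
    rcases (Q.erase m).eq_empty_or_nonempty with he | hne
    · have hbr : branchingNodes lt cls Q = ∅ := Finset.subset_empty.1 <| he ▸ fun x hx => by
        obtain ⟨hxQ, y, hyQ, -, -, hxy, -⟩ := mem_branchingNodes.1 hx
        exact Finset.mem_erase.2 ⟨fun e => (mem_maximalNodes.1 hm).2 y hyQ (e ▸ hxy), hxQ⟩
      rw [hbr, Finset.card_empty, zero_add, Nat.one_le_iff_ne_zero, Finset.card_ne_zero]
      exact ⟨m, hm⟩
    · have := ih _ (Finset.erase_ssubset (mem_maximalNodes.1 hm).1) hne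
      omega

theorem card_add_one_le_two_mul_card_sdiff_branchingNodes [DecidableEq ι]
    (h : IsForestOrder lt cls)
    {Q : Finset ι} (hQ : Q.Nonempty) : #Q + 1 ≤ 2 * #(Q \ branchingNodes lt cls Q) := by
  have hsub : maximalNodes lt Q ⊆ Q \ branchingNodes lt cls Q := fun x hx => by
    obtain ⟨hxQ, hxmax⟩ := mem_maximalNodes.1 hx
    exact Finset.mem_sdiff.2 ⟨hxQ, fun hb => by
      obtain ⟨-, y, hy, -, -, hxy, -⟩ := mem_branchingNodes.1 hb
      exact hxmax y hy hxy⟩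
  have h1 := h.card_branchingNodes_add_one_le hQ
  have h2 := Finset.card_sdiff_add_card_eq_card (s := branchingNodes lt cls Q) (t := Q)
    fun x hx => (mem_branchingNodes.1 hx).1
  have h3 := Finset.card_le_card hsub
  omega

end IsForestOrder

end ForestCount

namespace Paper

section Separation

variable {X : Type*} [TopologicalSpace X]

def Separates (p a b : X) : Prop :=
  a ≠ p ∧ b ≠ p ∧ connectedComponentIn {p}ᶜ a ≠ connectedComponentIn {p}ᶜ b

variable {p a b : X}

theorem Separates.mem_of_isPreconnected {E : Set X} (h : Separates p a b) (hE : IsPreconnected E)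
    (ha : a ∈ E) (hb : b ∈ E) : p ∈ E :=
  by_contra fun hp => h.2.2 (connectedComponentIn_compl_singleton_eq_of_isPreconnected hE ha hb hp)

theorem Separates.exists_eq_of_continuous (h : Separates p a b) {c : ℝ → X} (hc : Continuous c)
    (h0 : c 0 = a) (h1 : c 1 = b) : ∃ t ∈ Icc (0 : ℝ) 1, c t = p :=
  h.mem_of_isPreconnected (isPreconnected_Icc.image c hc.continuousOn)
    ⟨0, left_mem_Icc.2 zero_le_one, h0⟩ ⟨1, right_mem_Icc.2 zero_le_one, h1⟩

theorem Separates.of_injOn_of_lt {c : ℝ → X} (hc : Continuous c) (hinj : InjOn c (Icc 0 1))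
    (h1 : c 1 = b) {s s' : ℝ} (hs : s ∈ Icc (0 : ℝ) 1) (hs' : s' ∈ Icc (0 : ℝ) 1) (hss' : s < s')
    (h : Separates (c s) a b) : Separates (c s) a (c s') := by
  refine ⟨h.1, fun he => hss'.ne' (hinj hs' hs he), ?_⟩
  have hnot : c s ∉ c '' Icc s' 1 := fun hmem =>
    (hinj.mem_image_iff (Icc_subset_Icc hs'.1 le_rfl) hs).1 hmem |>.1.not_gt hss'
  rw [connectedComponentIn_compl_singleton_eq_of_continuous hc hnot hs'.2, h1]
  exact h.2.2

variable [T1Space X] [LocallyConnectedSpace X] [ConnectedSpace X]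

theorem connectedComponentIn_eq_of_separates_of_not_separates {y k l j : X} (hkl : k ≠ l)
    (hlk : ¬ Separates l y k) (h : Separates l y j) :
    connectedComponentIn {k}ᶜ j = connectedComponentIn {k}ᶜ l := by
  refine connectedComponentIn_compl_singleton_eq_of_mem h.2.1
    (mem_connectedComponentIn h.2.1) (fun hk => hlk ⟨h.1, hkl, ?_⟩) hkl
  rw [← connectedComponentIn_eq hk]
  exact h.2.2

end Separation

variable {T : Type*} [MetricSpace T]

section Tree

theorem IsTree.exists_arc (htree : IsTree T) {x y : T} (hxy : x ≠ y) :
    ∃ c : ℝ → T, Continuous c ∧ InjOn c (Icc 0 1) ∧ c 0 = x ∧ c 1 = y := by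
  obtain ⟨A, hA | ⟨γ, hγ, -, h0, h1⟩, -⟩ := htree.2.2.2 x y hxy
  · exact absurd hA.1 hxy
  refine ⟨IccExtend zero_le_one γ, continuous_IccExtend_iff.2 hγ.continuous,
    fun r hr r' hr' h => ?_, ?_, ?_⟩
  · rw [IccExtend_of_mem _ _ hr, IccExtend_of_mem _ _ hr'] at h
    exact congrArg Subtype.val (hγ.injective h)
  · rw [IccExtend_of_mem _ _ (left_mem_Icc.2 zero_le_one)]
    exact h0
  · rw [IccExtend_of_mem _ _ (right_mem_Icc.2 zero_le_one)]
    exact h1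

theorem IsTree.not_separates_of_separates (htree : IsTree T) {y a b : T} (h : Separates b y a) :
    ¬ Separates a y b := by
  intro h'
  obtain ⟨c, hc, hinj, h0, h1⟩ := htree.exists_arc h'.1
  obtain ⟨t, ht, rfl⟩ := h.exists_eq_of_continuous hc h0 h1
  have ht1 : t < 1 := ht.2.lt_of_ne fun e => h.2.1 (by rw [← h1, e])
  have hnot : a ∉ c '' Icc 0 t := by
    rw [← h1, hinj.mem_image_iff (Icc_subset_Icc le_rfl ht.2) (right_mem_Icc.2 zero_le_one)]
    exact fun h => h.2.not_gt ht1
  exact h'.2.2 (h0 ▸ connectedComponentIn_compl_singleton_eq_of_continuous hc hnot ht.1)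

theorem IsTree.separates_or_separates (htree : IsTree T) {y q p p' : T} (h : Separates p y q)
    (h' : Separates p' y q) (hne : p ≠ p') : Separates p y p' ∨ Separates p' y p := by
  obtain ⟨c, hc, hinj, h0, h1⟩ := htree.exists_arc fun e : y = q => h.2.2 (e ▸ rfl)
  obtain ⟨t, ht, rfl⟩ := h.exists_eq_of_continuous hc h0 h1
  obtain ⟨t', ht', rfl⟩ := h'.exists_eq_of_continuous hc h0 h1
  rcases lt_or_gt_of_ne fun e : t = t' => hne (e ▸ rfl) with hlt | hlt
  · exact Or.inl (h.of_injOn_of_lt hc hinj h1 ht ht' hlt)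
  · exact Or.inr (h'.of_injOn_of_lt hc hinj h1 ht' ht hlt)

variable [LocallyConnectedSpace T] [ConnectedSpace T]

theorem IsTree.separates_trans (htree : IsTree T) {y k l j : T} (hkl : Separates k y l)
    (hlj : Separates l y j) : Separates k y j := by
  have hlk := htree.not_separates_of_separates hkl
  refine ⟨hkl.1, fun e => hlk (e ▸ hlj), ?_⟩
  rw [connectedComponentIn_eq_of_separates_of_not_separates hkl.2.1.symm hlk hlj]
  exact hkl.2.2

theorem IsTree.connectedComponentIn_eq_of_separates (htree : IsTree T) {y k l j : T}
    (hl : Separates k y l) (hj : Separates k y j)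
    (hlj : Separates l y j ∨ Separates j y l ∨ l = j) :
    connectedComponentIn {k}ᶜ l = connectedComponentIn {k}ᶜ j := by
  rcases hlj with hlj | hjl | rfl
  · exact (connectedComponentIn_eq_of_separates_of_not_separates hl.2.1.symm
      (htree.not_separates_of_separates hl) hlj).symm
  · exact connectedComponentIn_eq_of_separates_of_not_separates hj.2.1.symm
      (htree.not_separates_of_separates hj) hjl
  · rfl

theorem IsTree.connectedComponentIn_subset_of_mem (htree : IsTree T) {p u b y b' : T}
    (hpV : p ∉ connectedComponentIn {u}ᶜ b) (hy : y ∈ connectedComponentIn {u}ᶜ b)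
    (hb' : b' ≠ y) (hpV' : p ∉ connectedComponentIn {y}ᶜ b') :
    connectedComponentIn {y}ᶜ b' ⊆ connectedComponentIn {u}ᶜ b := by
  have hyu : y ≠ u := connectedComponentIn_subset _ _ hy
  have hpy : p ≠ y := fun e => hpV (e ▸ hy)
  have huV' : u ∉ connectedComponentIn {y}ᶜ b' := by
    intro hu
    by_cases hpu : p = u
    · exact hpV' (hpu ▸ hu)
    refine htree.not_separates_of_separates (y := p) (a := u) (b := y) ⟨hpy, hyu.symm, ?_⟩
      ⟨hpu, hyu, ?_⟩
    · rw [← connectedComponentIn_eq hu]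
      exact fun e => hpV' (e ▸ mem_connectedComponentIn hpy)
    · rw [← connectedComponentIn_eq hy]
      exact fun e => hpV (e ▸ mem_connectedComponentIn hpu)
  exact connectedComponentIn_compl_singleton_subset hb' huV' hyu.symm hy

theorem IsTree.isForestOrder (htree : IsTree T) (y : T) :
    IsForestOrder (fun p q : T => Separates p y q) fun p q => connectedComponentIn {p}ᶜ q where
  asymm _ _ h := htree.not_separates_of_separates h
  trans _ _ _ := htree.separates_trans
  down x x' _ h h' := by
    by_cases hne : x = x'
    · exact Or.inr (Or.inr hne)
    · exact (htree.separates_or_separates h h' hne).imp_right Or.inl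
  cls_eq _ _ _ := htree.connectedComponentIn_eq_of_separates

end Tree

theorem exists_connectedComponentIn_notMem_of_notMem_leafSet {u q : T} (hu : u ∉ leafSet T)
    (hq : q ≠ u) : ∃ b ≠ u, q ∉ connectedComponentIn {u}ᶜ b := by
  by_contra! h
  have heq : connectedComponentIn {u}ᶜ q = {u}ᶜ :=
    (connectedComponentIn_subset _ _).antisymm fun b hb => by
      rw [← connectedComponentIn_eq (h b hb)]
      exact mem_connectedComponentIn hb
  exact hu ⟨⟨q, hq⟩, heq ▸ isPreconnected_connectedComponentIn⟩

/-- A point in the intersection of the closures lies in all of them or is the base point of a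
least one. -/
theorem exists_forall_mem_or_exists_least [CompactSpace T] [LocallyConnectedSpace T]
    {c : Set (Set T)} (hc : IsChain (· ⊆ ·) c) (hne : c.Nonempty)
    (hbr : ∀ V ∈ c, ∃ u, ∃ b ≠ u, V = connectedComponentIn {u}ᶜ b) :
    (∃ y, ∀ V ∈ c, y ∈ V) ∨ ∃ V₀ ∈ c, ∀ V ∈ c, V₀ ⊆ V := by
  have : Nonempty c := hne.to_subtype
  obtain ⟨y, hy⟩ := IsCompact.nonempty_iInter_of_directed_nonempty_isCompact_isClosed
    (fun V : c => closure V.1)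
    (fun V W => (hc.total V.2 W.2).elim (fun h => ⟨V, le_rfl, closure_mono h⟩)
      fun h => ⟨W, closure_mono h, le_rfl⟩)
    (fun V => (hbr V.1 V.2).elim fun _ ⟨b, hb, hV⟩ =>
      ⟨b, subset_closure (hV ▸ mem_connectedComponentIn hb)⟩)
    (fun _ => isClosed_closure.isCompact) fun _ => isClosed_closure
  have hycl : ∀ V ∈ c, y ∈ closure V := fun V hV => mem_iInter.1 hy ⟨V, hV⟩
  by_cases hall : ∀ V ∈ c, y ∈ V
  · exact Or.inl ⟨y, hall⟩
  push Not at hall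
  obtain ⟨V₀, hV₀, hyV₀⟩ := hall
  have base : ∀ V ∈ c, y ∉ V → ∃ b ≠ y, V = connectedComponentIn {y}ᶜ b := by
    intro V hV hyV
    obtain ⟨u, b, hb, rfl⟩ := hbr V hV
    obtain rfl : y = u := by_contra fun hyu =>
      hyV (mem_connectedComponentIn_of_mem_closure (hycl _ hV) hyu)
    exact ⟨b, hb, rfl⟩
  obtain ⟨b₀, -, rfl⟩ := base V₀ hV₀ hyV₀
  refine Or.inr ⟨_, hV₀, fun V hV => (hc.total hV₀ hV).elim id fun hVV₀ => ?_⟩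
  obtain ⟨b, hb, rfl⟩ := base V hV fun h => hyV₀ (hVV₀ h)
  rw [connectedComponentIn_eq (hVV₀ (mem_connectedComponentIn hb))]

theorem IsTree.exists_mem_leafSet_connectedComponentIn [CompactSpace T] [LocallyConnectedSpace T]
    [ConnectedSpace T] (htree : IsTree T) {p v : T} (hv : v ≠ p) :
    ∃ ℓ ∈ connectedComponentIn {p}ᶜ v, ℓ ∈ leafSet T := by
  by_contra! hleaf
  set W := connectedComponentIn {p}ᶜ v
  set S : Set (Set T) := {V | ∃ u ∈ W, ∃ b ≠ u, V = connectedComponentIn {u}ᶜ b ∧ p ∉ V}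
  have hpW : ∀ u ∈ W, p ≠ u := fun u hu e => connectedComponentIn_subset _ _ hu e.symm
  have hSW : ∀ V ∈ S, V ⊆ W := by
    rintro _ ⟨u, hu, b, hb, rfl, hp⟩
    exact connectedComponentIn_compl_singleton_subset hb hp (hpW u hu) hu
  have hbranch : ∀ y ∈ W, ∃ V' ∈ S, y ∉ V' ∧ ∀ V ∈ S, y ∈ V → V' ⊆ V := by
    intro y hy
    obtain ⟨b', hb', hpb'⟩ :=
      exists_connectedComponentIn_notMem_of_notMem_leafSet (hleaf y hy) (hpW y hy)
    refine ⟨_, ⟨y, hy, b', hb', rfl, hpb'⟩, fun h => (connectedComponentIn_subset _ _ h) rfl, ?_⟩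
    rintro _ ⟨u, -, b, -, rfl, hp⟩ hyV
    exact htree.connectedComponentIn_subset_of_mem hp hyV hb' hpb'
  obtain ⟨V₁, hV₁, -⟩ := hbranch v (mem_connectedComponentIn hv)
  obtain ⟨m, -, hm⟩ := zorn_superset_nonempty S (fun c hcS hc hne => by
    obtain ⟨y, hy⟩ | hleast := exists_forall_mem_or_exists_least hc hne fun V hV => by
      obtain ⟨u, -, b, hb, hV, -⟩ := hcS hV
      exact ⟨u, b, hb, hV⟩
    · obtain ⟨V, hV⟩ := hne
      obtain ⟨V', hV'S, -, hV'⟩ := hbranch y (hSW V (hcS hV) (hy V hV))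
      exact ⟨V', hV'S, fun V hV => hV' V (hcS hV) (hy V hV)⟩
    · obtain ⟨V₀, hV₀, hleast⟩ := hleast
      exact ⟨V₀, hcS hV₀, hleast⟩) V₁ hV₁
  obtain ⟨u, -, b, hb, hmeq, -⟩ := hm.1
  have hbm : b ∈ m := hmeq ▸ mem_connectedComponentIn hb
  obtain ⟨V', hV'S, hbV', hV'⟩ := hbranch b (hSW m hm.1 hbm)
  exact hbV' (hm.2 hV'S (hV' m hm.1 hbm) hbm)

section FreeBranches

theorem exists_ne_ne_of_mem_branchSet {p : T} (hp : p ∈ branchSet T) (C C' : Set T) :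
    ∃ w ≠ p, connectedComponentIn {p}ᶜ w ≠ C ∧ connectedComponentIn {p}ᶜ w ≠ C' := by
  obtain ⟨a, ha, b, hb, c, hc, hab, hac, hbc⟩ := hp
  by_contra! h
  rcases eq_or_ne (connectedComponentIn {p}ᶜ a) C with hA | hA
  · exact hbc ((h b hb fun e => hab (hA.trans e.symm)).trans
      (h c hc fun e => hac (hA.trans e.symm)).symm)
  rcases eq_or_ne (connectedComponentIn {p}ᶜ b) C with hB | hB
  · exact hac ((h a ha hA).trans (h c hc fun e => hbc (hB.trans e.symm)).symm)
  · exact hab ((h a ha hA).trans (h b hb hB).symm)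

/-- Of the at least three branches at `p`, one avoids both the branch of `y` and the single branch
holding the points of `F` that `p` separates from `y`. -/
theorem exists_branch_disjoint {F : Set T} {p y : T} (hp : p ∈ branchSet T) (hy : y ≠ p)
    (hF : ∀ q ∈ F, ∀ q' ∈ F, Separates p y q → Separates p y q' →
      connectedComponentIn {p}ᶜ q = connectedComponentIn {p}ᶜ q') :
    ∃ w ≠ p, ∀ q ∈ F, q ∉ connectedComponentIn {p}ᶜ w := by
  have hsep : ∀ {w q}, q ∈ connectedComponentIn {p}ᶜ w →
      connectedComponentIn {p}ᶜ w ≠ connectedComponentIn {p}ᶜ y → Separates p y q :=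
    fun hq hw => ⟨hy, connectedComponentIn_subset _ _ hq,
      connectedComponentIn_eq hq ▸ hw.symm⟩
  by_cases hex : ∃ q₀ ∈ F, Separates p y q₀
  · obtain ⟨q₀, hq₀, hsep₀⟩ := hex
    obtain ⟨w, hw, hwy, hwq₀⟩ := exists_ne_ne_of_mem_branchSet hp
      (connectedComponentIn {p}ᶜ y) (connectedComponentIn {p}ᶜ q₀)
    refine ⟨w, hw, fun q hq hqw => hwq₀ ?_⟩
    rw [connectedComponentIn_eq hqw]
    exact hF q hq q₀ hq₀ (hsep hqw hwy) hsep₀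
  · obtain ⟨w, hw, hwy, -⟩ := exists_ne_ne_of_mem_branchSet hp
      (connectedComponentIn {p}ᶜ y) (connectedComponentIn {p}ᶜ y)
    exact ⟨w, hw, fun q hq hqw => hex ⟨q, hq, hsep hqw hwy⟩⟩

variable [LocallyConnectedSpace T] [ConnectedSpace T]

theorem separates_of_branches_disjoint {F : Set T} {p q w w' u u' : T} (hp : p ∈ F) (hq : q ∈ F)
    (hpq : p ≠ q) (hw' : w' ≠ q) (hF : ∀ r ∈ F, r ∉ connectedComponentIn {p}ᶜ w)
    (hF' : ∀ r ∈ F, r ∉ connectedComponentIn {q}ᶜ w') (hu : u ∈ connectedComponentIn {p}ᶜ w)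
    (hu' : u' ∈ connectedComponentIn {q}ᶜ w') : Separates p u u' := by
  refine ⟨connectedComponentIn_subset _ _ hu, fun e => hF' p hp (e ▸ hu'), fun e => hF q hq ?_⟩
  rw [connectedComponentIn_eq hu, e,
    connectedComponentIn_compl_singleton_eq_of_mem hw' hu' (hF' p hp) hpq]
  exact mem_connectedComponentIn hpq.symm

theorem exists_mem_connectedComponentIn_dist_eq {p w ℓ y : T} {r : ℝ} (hw : w ≠ p)
    (hℓ : ℓ ∈ connectedComponentIn {p}ᶜ w) (hpr : dist y p < r) (hrℓ : r ≤ dist y ℓ) :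
    ∃ u ∈ connectedComponentIn {p}ᶜ w, dist y u = r := by
  obtain ⟨u, hu, hur⟩ := isPreconnected_connectedComponentIn.closure.intermediate_value
    (mem_closure_connectedComponentIn_compl_singleton hw) (subset_closure hℓ)
    (continuous_const.dist continuous_id).continuousOn ⟨hpr.le, hrℓ⟩
  refine ⟨u, mem_connectedComponentIn_of_mem_closure hu fun e => ?_, hur⟩
  subst e
  exact hpr.ne hur

end FreeBranches

theorem BoundedTurning.dist_le_of_separates {C : ℝ} (hbt : BoundedTurning C T) {p u v : T}
    (h : Separates p u v) : dist u p ≤ C * dist u v := by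
  obtain ⟨E, hE, hEc, huE, hvE, hdiam⟩ := hbt u v
  exact (dist_le_diam_of_mem hE.isBounded huE
    (h.mem_of_isPreconnected hEc.isPreconnected huE hvE)).trans hdiam

theorem qdist_comm (E : Set T) (a b : T) : qdist E a b = qdist E b a := by
  rw [qdist, qdist, dist_comm, add_comm]

theorem qdist_le_dist (E : Set T) (a b : T) : qdist E a b ≤ dist a b :=
  min_le_left _ _

theorem qdist_le_infDist_add_infDist (E : Set T) (a b : T) :
    qdist E a b ≤ infDist a E + infDist b E :=
  min_le_right _ _

theorem infDist_sub_infDist_le_qdist (E : Set T) (a b : T) :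
    infDist a E - infDist b E ≤ qdist E a b :=
  le_min (by linarith [infDist_le_infDist_add_dist (s := E) (x := a) (y := b)])
    (by linarith [infDist_nonneg (x := b) (s := E)])

theorem dist_le_of_qdist_le {E : Set T} {a b : T} {s : ℝ} (h : qdist E a b ≤ s)
    (hs : s < infDist a E + infDist b E) : dist a b ≤ s :=
  (min_le_iff.1 h).resolve_right hs.not_ge

theorem Doubling.card_le_of_separated {D σ : ℝ} (hdb : Doubling D T) (hσ : 0 < σ) {ι : Type*}
    {I : Finset ι} {f : ι → T} {c : T} (hf : ∀ i ∈ I, f i ∈ ball c (2 * σ))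
    (hsep : ∀ i ∈ I, ∀ j ∈ I, i ≠ j → σ ≤ dist (f i) (f j)) : (#I : ℝ) ≤ D * D := by
  classical
  obtain ⟨F, hF, hcov⟩ := hdb c (2 * σ) (by positivity)
  choose G hG hGcov using fun y => hdb y σ hσ
  have hpick : ∀ i ∈ I, ∃ w ∈ F.biUnion G, f i ∈ ball w (σ / 2) := by
    intro i hi
    obtain ⟨y, hy, hiy⟩ := mem_iUnion₂.1 (hcov (hf i hi))
    rw [mul_div_cancel_left₀ σ two_ne_zero] at hiy
    obtain ⟨w, hw, hiw⟩ := mem_iUnion₂.1 (hGcov y hiy)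
    exact ⟨w, Finset.mem_biUnion.2 ⟨y, hy, hw⟩, hiw⟩
  have : Nonempty T := ⟨c⟩
  choose! g hg hfg using hpick
  have hinj : InjOn g I := fun i hi j hj hij => by_contra fun hne => (hsep i hi j hj hne).not_gt <|
    calc dist (f i) (f j) ≤ dist (f i) (g i) + dist (f j) (g j) := hij ▸ dist_triangle_right _ _ _
      _ < σ / 2 + σ / 2 := add_lt_add (hfg i hi) (hfg j hj)
      _ = σ := add_halves σ
  have hD : 0 ≤ D := (Nat.cast_nonneg _).trans hF
  calc (#I : ℝ) ≤ #(F.biUnion G) := Nat.cast_le.2 (Finset.card_le_card_of_injOn g hg hinj)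
    _ ≤ ∑ y ∈ F, (#(G y) : ℝ) := by exact_mod_cast Finset.card_biUnion_le
    _ ≤ ∑ _y ∈ F, D := Finset.sum_le_sum fun y _ => hG y
    _ = #F * D := by rw [Finset.sum_const, nsmul_eq_mul]
    _ ≤ D * D := mul_le_mul_of_nonneg_right hF hD

theorem Doubling.card_add_one_le_of_separated {D σ r : ℝ} (hdb : Doubling D T) (hσr : σ ≤ r)
    (hr : r < 2 * σ) {ι : Type*} {I : Finset ι} {f : ι → T} {c : T}
    (hf : ∀ i ∈ I, dist c (f i) = r) (hsep : ∀ i ∈ I, ∀ j ∈ I, i ≠ j → σ ≤ dist (f i) (f j)) :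
    (#I : ℝ) + 1 ≤ D * D := by
  have hcard := hdb.card_le_of_separated (σ := σ) (by linarith) (I := I.insertNone)
    (f := fun o => o.elim c f) (c := c) ?_ ?_
  · rwa [Finset.card_insertNone, Nat.cast_add, Nat.cast_one] at hcard
  · rintro (_ | i) hi
    · exact mem_ball_self (by linarith)
    · rw [mem_ball, dist_comm]
      exact (hf i (Finset.mem_insertNone.1 hi i rfl)).trans_lt hr
  · rintro (_ | i) hi (_ | j) hj hij
    · exact absurd rfl hij
    · exact hσr.trans (hf j (Finset.mem_insertNone.1 hj j rfl)).ge
    · rw [dist_comm]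
      exact hσr.trans (hf i (Finset.mem_insertNone.1 hi i rfl)).ge
    · exact hsep i (Finset.mem_insertNone.1 hi i rfl) j (Finset.mem_insertNone.1 hj j rfl)
        fun e => hij (congrArg some e)

theorem Doubling.two_le [Nontrivial T] {D : ℝ} (hdb : Doubling D T) : 2 ≤ D := by
  by_contra! hD
  have hhalf : ∀ (x : T) (r : ℝ), 0 < r → ∃ x', ball x r ⊆ ball x' (r / 2) := by
    intro x r hr
    obtain ⟨F, hF, hcov⟩ := hdb x r hr
    obtain ⟨x', hx'⟩ := Finset.card_le_one_iff_subset_singleton.1 <|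
      Nat.le_of_lt_succ (by exact_mod_cast hF.trans_lt hD)
    refine ⟨x', hcov.trans (iUnion₂_subset fun y hy => ?_)⟩
    rw [Finset.mem_singleton.1 (hx' hy)]
  have hiter : ∀ k : ℕ, ∀ (x : T) (r : ℝ), 0 < r → ∃ x', ball x r ⊆ ball x' (r / 2 ^ k) := by
    intro k
    induction k with
    | zero => exact fun x r _ => ⟨x, by rw [pow_zero, div_one]⟩
    | succ k ih =>
      intro x r hr
      obtain ⟨x', hx'⟩ := ih x r hr
      obtain ⟨x'', hx''⟩ := hhalf x' (r / 2 ^ k) (by positivity)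
      exact ⟨x'', hx'.trans (by rwa [pow_succ, ← div_div])⟩
  obtain ⟨a, b, hab⟩ := exists_pair_ne T
  have hd : 0 < dist a b := dist_pos.2 hab
  obtain ⟨k, hk⟩ := pow_unbounded_of_one_lt (4 : ℝ) one_lt_two
  obtain ⟨x', hx'⟩ := hiter k a (2 * dist a b) (by positivity)
  have ha := hx' (mem_ball_self (by positivity))
  have hb := hx' (show b ∈ ball a (2 * dist a b) by rw [mem_ball, dist_comm]; linarith)
  rw [mem_ball] at ha hb
  have h2k : (0 : ℝ) < 2 ^ k := by positivity
  have : dist a b * 2 ^ k < 4 * dist a b := by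
    calc dist a b * 2 ^ k ≤ (dist a x' + dist b x') * 2 ^ k := by
          gcongr; exact dist_triangle_right _ _ _
      _ < (2 * dist a b / 2 ^ k + 2 * dist a b / 2 ^ k) * 2 ^ k := by gcongr
      _ = 4 * dist a b := by field_simp; ring
  nlinarith

theorem exists_dist_mem_Ico_of_chain (X : ℕ → T) {m : ℕ} {s r : ℝ}
    (hstep : ∀ j < m, dist (X j) (X (j + 1)) ≤ s) (hr : 0 < r) (hrm : r ≤ dist (X 0) (X m)) :
    ∃ j ≤ m, r ≤ dist (X 0) (X j) ∧ dist (X 0) (X j) < r + s := by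
  classical
  have hex : ∃ j, j ≤ m ∧ r ≤ dist (X 0) (X j) := ⟨m, le_rfl, hrm⟩
  obtain ⟨hjm, hj⟩ := Nat.find_spec hex
  obtain ⟨i, hi⟩ : ∃ i, Nat.find hex = i + 1 :=
    Nat.exists_eq_succ_of_ne_zero fun h0 => by rw [h0, dist_self] at hj; linarith
  rw [hi] at hjm hj
  have hlt : dist (X 0) (X i) < r := by
    have := Nat.find_min hex (hi ▸ lt_add_one i)
    push Not at this
    exact this (by omega)
  exact ⟨i + 1, hjm, hj, by linarith [dist_triangle (X 0) (X i) (X (i + 1)), hstep i (by omega)]⟩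

theorem exists_finset_card_eq_of_chain (X : ℕ → T) {m K : ℕ} {s : ℝ} (hs : 0 < s)
    (hstep : ∀ j < m, dist (X j) (X (j + 1)) ≤ s) (hK : K * s ≤ dist (X 0) (X m)) :
    ∃ F : Finset T, #F = K ∧ X 0 ∉ F ∧ (∀ q ∈ F, ∃ j ≤ m, X j = q) ∧
      ∀ q ∈ F, dist (X 0) q < (K + 1) * s := by
  classical
  have hlevel : ∀ k ∈ Finset.Icc 1 K, ∃ j ≤ m,
      k * s ≤ dist (X 0) (X j) ∧ dist (X 0) (X j) < k * s + s := fun k hk => by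
    obtain ⟨hk1, hkK⟩ := Finset.mem_Icc.1 hk
    exact exists_dist_mem_Ico_of_chain X hstep (by positivity)
      ((mul_le_mul_of_nonneg_right (Nat.cast_le.2 hkK) hs.le).trans hK)
  choose! J hJm hJlo hJhi using hlevel
  have hlt : ∀ k ∈ Finset.Icc 1 K, ∀ l ∈ Finset.Icc 1 K, k < l → X (J k) ≠ X (J l) :=
    fun k hk l hl hkl he => by
      have : (k : ℝ) + 1 ≤ l := by exact_mod_cast hkl
      nlinarith [hJhi k hk, hJlo l hl, he ▸ hJhi k hk]
  refine ⟨(Finset.Icc 1 K).image (X ∘ J), ?_, ?_, ?_, ?_⟩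
  · rw [Finset.card_image_of_injOn, Nat.card_Icc, Nat.add_sub_cancel]
    intro k hk l hl he
    rcases lt_trichotomy k l with hkl | hkl | hkl
    · exact absurd he (hlt k hk l hl hkl)
    · exact hkl
    · exact absurd he.symm (hlt l hl k hk hkl)
  · simp only [Finset.mem_image, Function.comp_apply, not_exists, not_and]
    intro k hk he
    have hk1 : (1 : ℝ) ≤ k := by exact_mod_cast (Finset.mem_Icc.1 hk).1
    have := hJlo k hk
    rw [he, dist_self] at this
    nlinarith
  · simp only [Finset.mem_image, Function.comp_apply, forall_exists_index, and_imp]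
    exact fun q k hk hq => ⟨J k, hJm k hk, hq⟩
  · simp only [Finset.mem_image, Function.comp_apply, forall_exists_index, and_imp]
    rintro q k hk rfl
    have hkK : (k : ℝ) ≤ K := by exact_mod_cast (Finset.mem_Icc.1 hk).2
    nlinarith [hJhi k hk]

theorem exists_prefix_infDist_ge (M : Set T) (X : ℕ → T) {n : ℕ} {s : ℝ}
    (hstep : ∀ j < n, qdist M (X j) (X (j + 1)) ≤ s) (h0 : 2 * s ≤ infDist (X 0) M) :
    ∃ m ≤ n, (∀ i ≤ m, 2 * s ≤ infDist (X i) M) ∧ (m = n ∨ infDist (X m) M < 3 * s) := by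
  classical
  by_cases hex : ∃ j, j < n ∧ infDist (X (j + 1)) M < 2 * s
  · obtain ⟨hmn, hm⟩ := Nat.find_spec hex
    refine ⟨Nat.find hex, hmn.le, fun i hi => ?_, Or.inr ?_⟩
    · rcases i with _ | i
      · exact h0
      · have := Nat.find_min hex (show i < Nat.find hex by omega)
        push Not at this
        exact this (by omega)
    · linarith [infDist_sub_infDist_le_qdist M (X (Nat.find hex)) (X (Nat.find hex + 1)),
        hstep _ hmn]
  · push Not at hex
    refine ⟨n, le_rfl, fun i hi => ?_, Or.inl rfl⟩
    rcases i with _ | i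
    · exact h0
    · exact hex i (by omega)

section Counting

variable [CompactSpace T] [LocallyConnectedSpace T] [ConnectedSpace T]

theorem IsTree.exists_free_branch_dist_eq (htree : IsTree T) {F : Set T} {p y : T}
    (hp : p ∈ branchSet T) (hy : y ≠ p)
    (hF : ∀ q ∈ F, ∀ q' ∈ F, Separates p y q → Separates p y q' →
      connectedComponentIn {p}ᶜ q = connectedComponentIn {p}ᶜ q')
    {r : ℝ} (hpr : dist y p < r) (hr : r ≤ infDist y (closure (leafSet T))) :
    ∃ w ≠ p, (∀ q ∈ F, q ∉ connectedComponentIn {p}ᶜ w) ∧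
      ∃ u ∈ connectedComponentIn {p}ᶜ w, dist y u = r := by
  obtain ⟨w, hw, hwF⟩ := exists_branch_disjoint hp hy hF
  obtain ⟨ℓ, hℓ, hℓleaf⟩ := htree.exists_mem_leafSet_connectedComponentIn hw
  exact ⟨w, hw, hwF, exists_mem_connectedComponentIn_dist_eq hw hℓ hpr
    (hr.trans (infDist_le_dist_of_mem (subset_closure hℓleaf)))⟩

theorem card_add_three_le_of_subset_branchSet (htree : IsTree T) (hbt : BoundedTurning 1 T)
    {D : ℝ} (hdb : Doubling D T) {F : Finset T} (hFne : F.Nonempty)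
    (hFb : ∀ q ∈ F, q ∈ branchSet T) {y : T} (hy : y ∉ F) {r ρ : ℝ}
    (hρ : ∀ q ∈ F, dist y q < ρ) (hρr : 2 * ρ < r) (hr : r ≤ infDist y (closure (leafSet T))) :
    (#F : ℝ) + 3 ≤ 2 * (D * D) := by
  classical
  set G := F \ branchingNodes (fun p q => Separates p y q)
    (fun p q => connectedComponentIn {p}ᶜ q) F
  have hG : #F + 1 ≤ 2 * #G :=
    (htree.isForestOrder y).card_add_one_le_two_mul_card_sdiff_branchingNodes hFne
  have hρ0 : 0 < ρ := by
    obtain ⟨q, hq⟩ := hFne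
    exact dist_nonneg.trans_lt (hρ q hq)
  have hfree : ∀ p ∈ G, ∃ u, (∃ w ≠ p, (∀ q ∈ (F : Set T), q ∉ connectedComponentIn {p}ᶜ w) ∧
      u ∈ connectedComponentIn {p}ᶜ w) ∧ dist y u = r := by
    intro p hp
    obtain ⟨hpF, hpG⟩ := Finset.mem_sdiff.1 hp
    obtain ⟨w, hw, hwF, u, hu, hur⟩ := htree.exists_free_branch_dist_eq (F := (F : Set T))
      (hFb p hpF) (fun e : y = p => hy (e ▸ hpF))
      (fun q hq q' hq' h h' => by_contra fun hne =>
        hpG (mem_branchingNodes.2 ⟨hpF, q, hq, q', hq', h, h', hne⟩))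
      ((hρ p hpF).trans (by linarith)) hr
    exact ⟨u, ⟨w, hw, hwF, hu⟩, hur⟩
  choose! u hu hur using hfree
  have hcount := hdb.card_add_one_le_of_separated (σ := r - ρ) (by linarith) (by linarith) hur
    fun p hp q hq hpq => by
      obtain ⟨w, hw, hwF, hpw⟩ := hu p hp
      obtain ⟨w', hw', hw'F, hqw'⟩ := hu q hq
      have hpF := (Finset.mem_sdiff.1 hp).1
      have := hbt.dist_le_of_separates <| separates_of_branches_disjoint hpF
        (Finset.mem_sdiff.1 hq).1 hpq hw' hwF hw'F hpw hqw'
      linarith [dist_triangle y p (u p), dist_comm p (u p), hρ p hpF, hur p hp]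
  have hG' : (#F : ℝ) + 1 ≤ 2 * #G := by exact_mod_cast hG
  linarith

variable [Nontrivial T]

theorem false_of_chain_of_le_infDist (htree : IsTree T) (hbt : BoundedTurning 1 T) {D : ℝ}
    (hdb : Doubling D T) (X : ℕ → T) {n : ℕ}
    (hmem : ∀ j ≤ n, X j ∈ branchSet T ∪ closure (leafSet T))
    (hpos : 0 < qdist (closure (leafSet T)) (X 0) (X n))
    (hstep : ∀ j < n, qdist (closure (leafSet T)) (X j) (X (j + 1)) ≤
      1 / (8 * D ^ 2) * qdist (closure (leafSet T)) (X 0) (X n))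
    (h0 : qdist (closure (leafSet T)) (X 0) (X n) / 2 ≤ infDist (X 0) (closure (leafSet T))) :
    False := by
  set M := closure (leafSet T)
  set d := qdist M (X 0) (X n)
  set s := 1 / (8 * D ^ 2) * d
  have hD : 2 ≤ D := hdb.two_le
  have hds : d = 8 * D ^ 2 * s := by simp only [s]; field_simp
  have hs : 0 < s := by positivity
  have h4s : 4 * s ≤ D ^ 2 * s := mul_le_mul_of_nonneg_right (by nlinarith) hs.le
  obtain ⟨m, hmn, hfar, hend⟩ := exists_prefix_infDist_ge M X hstep (by linarith)
  have hdiststep : ∀ j < m, dist (X j) (X (j + 1)) ≤ s := fun j hj =>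
    dist_le_of_qdist_le (hstep j (by omega)) (by linarith [hfar j hj.le, hfar (j + 1) hj])
  have hreach : d / 2 - 3 * s ≤ dist (X 0) (X m) := by
    rcases hend with rfl | hend
    · linarith [qdist_le_dist M (X 0) (X m)]
    · linarith [infDist_le_infDist_add_dist (s := M) (x := X 0) (y := X m)]
  set K := ⌈2 * D ^ 2 - 2⌉₊
  have hK : 2 * D ^ 2 - 2 ≤ K := Nat.le_ceil _
  have hK' : (K : ℝ) < 2 * D ^ 2 - 1 := by
    linarith [Nat.ceil_lt_add_one (show 0 ≤ 2 * D ^ 2 - 2 by nlinarith)]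
  have hKs : K * s < (2 * D ^ 2 - 1) * s := mul_lt_mul_of_pos_right hK' hs
  obtain ⟨F, hFcard, hy, hFX, hFdist⟩ :=
    exists_finset_card_eq_of_chain X hs hdiststep (K := K) (by linarith)
  have hFne : F.Nonempty := Finset.card_pos.1 (by rw [hFcard]; exact Nat.ceil_pos.2 (by nlinarith))
  have hFb : ∀ q ∈ F, q ∈ branchSet T := fun q hq => by
    obtain ⟨j, hj, rfl⟩ := hFX q hq
    refine (hmem j (hj.trans hmn)).resolve_right fun hM => ?_
    linarith [hfar j hj, infDist_zero_of_mem hM]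
  have := card_add_three_le_of_subset_branchSet htree hbt hdb hFne hFb hy hFdist
    (by linarith) h0
  rw [hFcard] at this
  nlinarith

theorem false_of_chain (htree : IsTree T) (hbt : BoundedTurning 1 T) {D : ℝ}
    (hdb : Doubling D T) (X : ℕ → T) {n : ℕ}
    (hmem : ∀ j ≤ n, X j ∈ branchSet T ∪ closure (leafSet T))
    (hpos : 0 < qdist (closure (leafSet T)) (X 0) (X n))
    (hstep : ∀ j < n, qdist (closure (leafSet T)) (X j) (X (j + 1)) ≤
      1 / (8 * D ^ 2) * qdist (closure (leafSet T)) (X 0) (X n)) : False := by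
  rcases le_or_gt (qdist (closure (leafSet T)) (X 0) (X n) / 2)
    (infDist (X 0) (closure (leafSet T))) with h0 | h0
  · exact false_of_chain_of_le_infDist htree hbt hdb X hmem hpos hstep h0
  refine false_of_chain_of_le_infDist htree hbt hdb (fun j => X (n - j)) (n := n)
    (fun j _ => hmem _ (Nat.sub_le n j)) ?_ (fun j hj => ?_) ?_
  · simpa [qdist_comm _ (X n)] using hpos
  · have := hstep (n - (j + 1)) (by omega)
    rw [show n - (j + 1) + 1 = n - j by omega, qdist_comm, qdist_comm _ (X 0)] at this
    simpa using this
  · rw [Nat.sub_zero, Nat.sub_self, qdist_comm]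
    linarith [qdist_le_infDist_add_infDist (closure (leafSet T)) (X 0) (X n)]

end Counting

end Paper

theorem statement2_general (T : Type*) [MetricSpace T] (hnontriv : ∃ x y : T, x ≠ y)
    (D : ℝ) (htree : Paper.IsTree T)
    (hbt : Paper.BoundedTurning 1 T) (hdb : Paper.Doubling D T) :
    ¬ ∃ (n : ℕ) (x : Fin (n + 1) → T),
        (∀ i, x i ∈ Paper.branchSet T ∪ closure (Paper.leafSet T)) ∧
        0 < Paper.qdist (closure (Paper.leafSet T)) (x 0) (x (Fin.last n)) ∧
        ∀ i : Fin n,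
          Paper.qdist (closure (Paper.leafSet T)) (x i.castSucc) (x i.succ) ≤
            (1 / (8 * D ^ 2)) *
              Paper.qdist (closure (Paper.leafSet T)) (x 0) (x (Fin.last n)) := by
  rintro ⟨n, x, hmem, hpos, hsteps⟩
  obtain ⟨a, b, hab⟩ := hnontriv
  have : Nontrivial T := ⟨a, b, hab⟩
  have : CompactSpace T := htree.1
  have : ConnectedSpace T := htree.2.1
  have : LocallyConnectedSpace T := htree.2.2.1
  set X : ℕ → T := fun j => x ⟨min j n, by omega⟩
  have hX : ∀ i : Fin (n + 1), X i = x i := fun i => congrArg x (Fin.ext (min_eq_left i.is_le))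
  have h0 : X 0 = x 0 := hX 0
  have hn : X n = x (Fin.last n) := hX (Fin.last n)
  refine Paper.false_of_chain htree hbt hdb X (n := n) (fun j _ => hmem _) (by rwa [h0, hn])
    fun j hj => ?_
  rw [h0, hn, show X j = x (Fin.castSucc ⟨j, hj⟩) from hX (Fin.castSucc ⟨j, hj⟩),
    show X (j + 1) = x (Fin.succ ⟨j, hj⟩) from hX (Fin.succ ⟨j, hj⟩)]
  exact hsteps ⟨j, hj⟩

/-- In a nondegenerate `(1,D)`-QC tree `T`, the image of
`B(T) ∪ closure (L(T))` in the metric quotient `T / closure (L(T))` is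
`1/(8D²)`-uniformly disconnected with respect to the quotient metric
(computed on representatives via `Paper.qdist`). -/
theorem statement2 (T : Type*) [MetricSpace T] (hnontriv : ∃ x y : T, x ≠ y)
    (D : ℝ) (hD : 1 ≤ D) (htree : Paper.IsTree T)
    (hbt : Paper.BoundedTurning 1 T) (hdb : Paper.Doubling D T) :
    ¬ ∃ (n : ℕ) (x : Fin (n + 1) → T),
        (∀ i, x i ∈ Paper.branchSet T ∪ closure (Paper.leafSet T)) ∧
        0 < Paper.qdist (closure (Paper.leafSet T)) (x 0) (x (Fin.last n)) ∧
        ∀ i : Fin n,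
          Paper.qdist (closure (Paper.leafSet T)) (x i.castSucc) (x i.succ) ≤
            (1 / (8 * D ^ 2)) *
              Paper.qdist (closure (Paper.leafSet T)) (x 0) (x (Fin.last n)) :=
  statement2_general T hnontriv D htree hbt hdb
end

section
/- Let X be a metric space, let A, B ⊆ X with A nonempty, let ε ∈ (0,1), and let N be an ε-Whitney net in B with respect to A. Then for every x ∈ B \ A there exists u ∈ N such that d(x,u) ≤ (ε/(1−ε))·d(x,A). -/
open Metric Set

namespace Paper.IsWhitneyNet

variable {X : Type*} [MetricSpace X] {ε : ℝ} {A B N : Set X} {x : X}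

theorem exists_dist_lt_of_notMem (hN : IsWhitneyNet ε A B N) (hx : x ∈ B \ A) (hxN : x ∉ N) :
    ∃ w ∈ N, dist x w < ε * max (infDist x A) (infDist w A) := by
  obtain ⟨hNsub, hsep, hmax⟩ := hN
  by_contra! hfar
  have hsep' : ∀ u ∈ insert x N, ∀ v ∈ insert x N, u ≠ v →
      ε * max (infDist u A) (infDist v A) ≤ dist u v := by
    rintro u (rfl | hu) v (rfl | hv) huv
    · exact absurd rfl huv
    · exact hfar v hv
    · rw [max_comm, dist_comm]
      exact hfar u hu
    · exact hsep u hu v hv huv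
  exact hxN (hmax _ (subset_insert x N) (insert_subset hx hNsub) hsep' ▸ mem_insert x N)

end Paper.IsWhitneyNet

/-- Since `infDist · A` is `1`-Lipschitz, the maximum is at most `infDist x A + dist x w`;
solving `dist x w < ε (infDist x A + dist x w)` for `dist x w` gives the bound. -/
theorem dist_le_of_dist_lt_mul_max_infDist {X : Type*} [MetricSpace X] {A : Set X} {x w : X}
    {ε : ℝ} (hε₀ : 0 ≤ ε) (hε₁ : ε < 1)
    (h : dist x w < ε * max (infDist x A) (infDist w A)) :
    dist x w ≤ ε / (1 - ε) * infDist x A := by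
  have hmax : max (infDist x A) (infDist w A) ≤ infDist x A + dist x w :=
    max_le (le_add_of_nonneg_right dist_nonneg)
      (dist_comm x w ▸ infDist_le_infDist_add_dist)
  have hlt : dist x w < ε * (infDist x A + dist x w) :=
    h.trans_le (mul_le_mul_of_nonneg_left hmax hε₀)
  rw [div_mul_eq_mul_div, le_div_iff₀ (sub_pos.2 hε₁)]
  linarith

theorem statement4_general (X : Type*) [MetricSpace X] (A B N : Set X)
    (ε : ℝ) (hε : ε ∈ Set.Ioo (0 : ℝ) 1) (hN : Paper.IsWhitneyNet ε A B N) :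
    ∀ x ∈ B \ A, ∃ u ∈ N, dist x u ≤ (ε / (1 - ε)) * Metric.infDist x A := by
  intro x hx
  by_cases hxN : x ∈ N
  · refine ⟨x, hxN, ?_⟩
    rw [dist_self]
    exact mul_nonneg (div_nonneg hε.1.le (sub_pos.2 hε.2).le) infDist_nonneg
  obtain ⟨w, hw, hlt⟩ := hN.exists_dist_lt_of_notMem hx hxN
  exact ⟨w, hw, dist_le_of_dist_lt_mul_max_infDist hε.1.le hε.2 hlt⟩

/-- A Whitney net accumulates near `A`: every `x ∈ B \ A` is within
distance `(ε/(1-ε))·d(x,A)` of some point of the net. -/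
theorem statement4 (X : Type*) [MetricSpace X] (A B N : Set X) (hA : A.Nonempty)
    (ε : ℝ) (hε : ε ∈ Set.Ioo (0 : ℝ) 1) (hN : Paper.IsWhitneyNet ε A B N) :
    ∀ x ∈ B \ A, ∃ u ∈ N, dist x u ≤ (ε / (1 - ε)) * Metric.infDist x A :=
  statement4_general X A B N ε hε hN
end

section
/- (Pełczyński decomposition method.) Let V be a real Banach space such that there is a continuous linear equivalence between V and the ℓ¹-direct sum ⊕¹_{n∈ℕ} V of countably infinitely many copies of V. Let W be a real Banach space that is a direct summand of V, i.e., there exist a Banach space U and a continuous linear equivalence between V and U ⊕ W. Then there is a continuous linear equivalence between V and W ⊕ V. -/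
/-!
From `V ≅ U × W` and `V ≅ ℓ¹(V)` one gets `V ≅ ℓ¹(U) × ℓ¹(W)`. Splitting off the first
coordinate gives `ℓ¹(W) ≅ W × ℓ¹(W)`, so the summand `ℓ¹(W)` of `V` absorbs one more copy of `W`:
`W × V ≅ ℓ¹(U) × (W × ℓ¹(W)) ≅ ℓ¹(U) × ℓ¹(W) ≅ V`.
-/

open Metric Set

open scoped lp ENNReal

namespace lp

variable {α 𝕜 : Type*} [NontriviallyNormedField 𝕜]

section Congr

variable (p : ℝ≥0∞) [Fact (1 ≤ p)] {E F : Type*} [NormedAddCommGroup E] [NormedSpace 𝕜 E]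
  [NormedAddCommGroup F] [NormedSpace 𝕜 F]

noncomputable def congrCLE (e : E ≃L[𝕜] F) : lp (fun _ : α ↦ E) p ≃L[𝕜] lp (fun _ : α ↦ F) p :=
  ContinuousLinearEquiv.equivOfInverse
    (mapCLM p (fun _ ↦ (e : E →L[𝕜] F)) (norm_nonneg _) fun _ ↦ le_rfl)
    (mapCLM p (fun _ ↦ (e.symm : F →L[𝕜] E)) (norm_nonneg _) fun _ ↦ le_rfl)
    (fun _ ↦ by ext; simp) (fun _ ↦ by ext; simp)

end Congr

section Prod

variable (p : ℝ≥0∞) [Fact (1 ≤ p)] {E F : α → Type*}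
  [∀ i, NormedAddCommGroup (E i)] [∀ i, NormedSpace 𝕜 (E i)]
  [∀ i, NormedAddCommGroup (F i)] [∀ i, NormedSpace 𝕜 (F i)]

noncomputable def prodCLE : lp (fun i ↦ E i × F i) p ≃L[𝕜] lp E p × lp F p :=
  ContinuousLinearEquiv.equivOfInverse
    ((mapCLM p (fun i ↦ ContinuousLinearMap.fst 𝕜 (E i) (F i)) zero_le_one
        fun _ ↦ ContinuousLinearMap.norm_fst_le ..).prod
      (mapCLM p (fun i ↦ ContinuousLinearMap.snd 𝕜 (E i) (F i)) zero_le_one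
        fun _ ↦ ContinuousLinearMap.norm_snd_le ..))
    ((mapCLM p (fun i ↦ ContinuousLinearMap.inl 𝕜 (E i) (F i)) zero_le_one
        fun _ ↦ ContinuousLinearMap.norm_inl_le_one ..).coprod
      (mapCLM p (fun i ↦ ContinuousLinearMap.inr 𝕜 (E i) (F i)) zero_le_one
        fun _ ↦ ContinuousLinearMap.norm_inr_le_one ..))
    (fun _ ↦ by ext <;> simp) (fun _ ↦ by ext <;> simp)

end Prod

section Shift

theorem memℓp_one_iff {E : α → Type*} [∀ i, NormedAddCommGroup (E i)] {f : ∀ i, E i} :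
    Memℓp f 1 ↔ Summable fun i ↦ ‖f i‖ := by
  simpa using memℓp_gen_iff (p := 1) (f := f) (by simp)

theorem hasSum_norm_one {E : α → Type*} [∀ i, NormedAddCommGroup (E i)] (f : lp E 1) :
    HasSum (fun i ↦ ‖f i‖) ‖f‖ := by
  simpa using hasSum_norm (p := 1) (by simp) f

variable {E : Type*} [NormedAddCommGroup E]

def tail (f : ℓ¹(ℕ, E)) : ℓ¹(ℕ, E) :=
  ⟨fun n ↦ f (n + 1), memℓp_one_iff.2 <| (summable_nat_add_iff 1).2 (hasSum_norm_one f).summable⟩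

def cons (x : E) (f : ℓ¹(ℕ, E)) : ℓ¹(ℕ, E) :=
  ⟨fun n ↦ Nat.casesOn n x f,
    memℓp_one_iff.2 <| (summable_nat_add_iff 1).1 (hasSum_norm_one f).summable⟩

theorem norm_eq_norm_zero_add_norm_tail (f : ℓ¹(ℕ, E)) : ‖f‖ = ‖f 0‖ + ‖tail f‖ := by
  have htail : HasSum (fun n ↦ ‖f (n + 1)‖) ‖tail f‖ := hasSum_norm_one (tail f)
  have := (hasSum_nat_add_iff (f := fun n ↦ ‖f n‖) 1).1 htail
  simpa [add_comm] using (hasSum_norm_one f).unique this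

theorem norm_cons (x : E) (f : ℓ¹(ℕ, E)) : ‖cons x f‖ = ‖x‖ + ‖f‖ :=
  norm_eq_norm_zero_add_norm_tail (cons x f)

theorem cons_zero_tail (f : ℓ¹(ℕ, E)) : cons (f 0) (tail f) = f := by
  ext n
  cases n <;> rfl

variable (𝕜 E) in
noncomputable def consCLE [NormedSpace 𝕜 E] : ℓ¹(ℕ, E) ≃L[𝕜] E × ℓ¹(ℕ, E) :=
  LinearEquiv.toContinuousLinearEquivOfBounds
    { toFun f := (f 0, tail f)
      invFun g := cons g.1 g.2
      map_add' _ _ := rfl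
      map_smul' _ _ := rfl
      left_inv := cons_zero_tail
      right_inv _ := rfl }
    1 2
    (fun f ↦ by
      rw [one_mul, Prod.norm_def, norm_eq_norm_zero_add_norm_tail f]
      exact max_le_add_of_nonneg (norm_nonneg _) (norm_nonneg _))
    (fun g ↦ by
      change ‖cons g.1 g.2‖ ≤ 2 * ‖g‖
      rw [norm_cons, Prod.norm_def]
      linarith [le_max_left ‖g.1‖ ‖g.2‖, le_max_right ‖g.1‖ ‖g.2‖])

end Shift

end lp

namespace ContinuousLinearEquiv

variable {R V A B W : Type*} [Semiring R]
  [AddCommMonoid V] [Module R V] [TopologicalSpace V]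
  [AddCommMonoid A] [Module R A] [TopologicalSpace A]
  [AddCommMonoid B] [Module R B] [TopologicalSpace B]
  [AddCommMonoid W] [Module R W] [TopologicalSpace W]

def prodOfSummandAbsorbs (e : V ≃L[R] A × B) (f : B ≃L[R] W × B) : V ≃L[R] W × V :=
  e.trans <| ((ContinuousLinearEquiv.refl R A).prodCongr f).trans <|
    (prodAssoc R A W B).symm.trans <|
    ((prodComm R A W).prodCongr (ContinuousLinearEquiv.refl R B)).trans <|
    (prodAssoc R W A B).trans <| (ContinuousLinearEquiv.refl R W).prodCongr e.symm

end ContinuousLinearEquiv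

theorem statement5_general (V W : Type*)
    [NormedAddCommGroup V] [NormedSpace ℝ V]
    [NormedAddCommGroup W] [NormedSpace ℝ W]
    (h1 : Nonempty (V ≃L[ℝ] lp (fun _ : ℕ => V) 1))
    (h2 : ∃ (U : Type) (_ : NormedAddCommGroup U) (_ : NormedSpace ℝ U)
        (_ : CompleteSpace U), Nonempty (V ≃L[ℝ] (U × W))) :
    Nonempty (V ≃L[ℝ] (W × V)) := by
  obtain ⟨e⟩ := h1
  obtain ⟨U, _, _, _, ⟨d⟩⟩ := h2
  exact ⟨(e.trans <| (lp.congrCLE 1 d).trans (lp.prodCLE 1)).prodOfSummandAbsorbs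
    (lp.consCLE ℝ W)⟩

/-- (Pełczyński decomposition method.) If a Banach space `V` is
isomorphic to the `ℓ¹`-sum of countably many copies of itself and `W` is a direct
summand of `V`, then `V ≅ W ⊕ V`. -/
theorem statement5 (V W : Type*)
    [NormedAddCommGroup V] [NormedSpace ℝ V] [CompleteSpace V]
    [NormedAddCommGroup W] [NormedSpace ℝ W] [CompleteSpace W]
    (h1 : Nonempty (V ≃L[ℝ] lp (fun _ : ℕ => V) 1))
    (h2 : ∃ (U : Type) (_ : NormedAddCommGroup U) (_ : NormedSpace ℝ U)
        (_ : CompleteSpace U), Nonempty (V ≃L[ℝ] (U × W))) :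
    Nonempty (V ≃L[ℝ] (W × V)) :=
  statement5_general V W h1 h2
end

section
/- Let Z be a metric space, X ⊆ Z a nonempty closed subset, ε ∈ (0,1], and N an ε-Whitney net in Z with respect to X. Define u(n₁,n₂) := max{d(n₁,X), d(n₂,X)} for distinct n₁, n₂ ∈ N and u(n,n) := 0. Then u is an ultrametric on N (it is positive on distinct points, symmetric, and satisfies u(n₁,n₃) ≤ max{u(n₁,n₂), u(n₂,n₃)}), and for all distinct n₁, n₂ ∈ N one has ε·u(n₁,n₂) ≤ ρ([n₁],[n₂]) ≤ 2·u(n₁,n₂), where ρ is the quotient metric of the metric quotient (X ∪ N)/X. In particular, (X ∪ N)/X is bi-Lipschitz equivalent to an ultrametric space. -/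
open Metric Set

open Classical in
/-- The candidate ultrametric on a Whitney net: `wdist X n₁ n₂ = max{d(n₁,X), d(n₂,X)}`
for `n₁ ≠ n₂`, and `0` on the diagonal. -/
noncomputable def Paper.wdist {Z : Type*} [MetricSpace Z] (X : Set Z) (a b : Z) : ℝ :=
  if a = b then 0 else max (Metric.infDist a X) (Metric.infDist b X)

namespace Paper

variable {Z : Type*} [MetricSpace Z] {X : Set Z}

theorem wdist_of_ne {a b : Z} (h : a ≠ b) :
    wdist X a b = max (infDist a X) (infDist b X) :=
  if_neg h

theorem wdist_nonneg (a b : Z) : 0 ≤ wdist X a b := by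
  unfold wdist
  split_ifs
  exacts [le_rfl, le_max_of_le_left infDist_nonneg]

theorem wdist_comm (a b : Z) : wdist X a b = wdist X b a := by
  by_cases h : a = b
  · rw [h]
  · rw [wdist_of_ne h, wdist_of_ne (Ne.symm h), max_comm]

theorem wdist_le_max (a b c : Z) : wdist X a c ≤ max (wdist X a b) (wdist X b c) := by
  by_cases hac : a = c
  · rw [hac, wdist, if_pos rfl]
    exact le_max_of_le_left (wdist_nonneg _ _)
  by_cases hab : a = b
  · subst hab
    exact le_max_right _ _
  by_cases hbc : b = c
  · subst hbc
    exact le_max_left _ _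
  rw [wdist_of_ne hac, wdist_of_ne hab, wdist_of_ne hbc]
  exact max_le_max (le_max_left _ _) (le_max_right _ _)

theorem wdist_pos (hX : X.Nonempty) (hXc : IsClosed X) {a b : Z} (ha : a ∉ X) (h : a ≠ b) :
    0 < wdist X a b := by
  rw [wdist_of_ne h]
  exact lt_max_of_lt_left ((hXc.notMem_iff_infDist_pos hX).mp ha)

theorem qdist_le_two_mul_wdist {a b : Z} (h : a ≠ b) : qdist X a b ≤ 2 * wdist X a b :=
  calc qdist X a b ≤ infDist a X + infDist b X := min_le_right _ _
    _ ≤ 2 * wdist X a b := by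
      rw [wdist_of_ne h, two_mul]
      exact add_le_add (le_max_left _ _) (le_max_right _ _)

theorem IsWhitneyNet.mul_wdist_le_qdist {ε : ℝ} (hε : ε ≤ 1) {B N : Set Z}
    (hN : IsWhitneyNet ε X B N) {a b : Z} (ha : a ∈ N) (hb : b ∈ N) (h : a ≠ b) :
    ε * wdist X a b ≤ qdist X a b := by
  rw [wdist_of_ne h]
  refine le_min (hN.2.1 a ha b hb h) ?_
  calc ε * max (infDist a X) (infDist b X) ≤ max (infDist a X) (infDist b X) :=
        mul_le_of_le_one_left (le_max_of_le_left infDist_nonneg) hε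
    _ ≤ infDist a X + infDist b X := max_le_add_of_nonneg infDist_nonneg infDist_nonneg

end Paper

/-- For an `ε`-Whitney net `N` in `Z` with respect to a nonempty
closed `X`, the function `wdist` is an ultrametric on `N`, and on distinct points it
is comparable (with constants `ε` and `2`) to the quotient metric of `(X ∪ N)/X`
(which, computed on representatives `n₁, n₂ ∈ N`, is `Paper.qdist X n₁ n₂`).
In particular `(X ∪ N)/X` is bi-Lipschitz equivalent to an ultrametric space. -/
theorem statement6 (Z : Type*) [MetricSpace Z] (X : Set Z) (hX : X.Nonempty)
    (hXc : IsClosed X) (ε : ℝ) (hε : ε ∈ Set.Ioc (0 : ℝ) 1) (N : Set Z)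
    (hN : Paper.IsWhitneyNet ε X Set.univ N) :
    (∀ n1 ∈ N, ∀ n2 ∈ N, n1 ≠ n2 → 0 < Paper.wdist X n1 n2) ∧
    (∀ n1 ∈ N, ∀ n2 ∈ N, Paper.wdist X n1 n2 = Paper.wdist X n2 n1) ∧
    (∀ n1 ∈ N, ∀ n2 ∈ N, ∀ n3 ∈ N,
      Paper.wdist X n1 n3 ≤ max (Paper.wdist X n1 n2) (Paper.wdist X n2 n3)) ∧
    (∀ n1 ∈ N, ∀ n2 ∈ N, n1 ≠ n2 →
      ε * Paper.wdist X n1 n2 ≤ Paper.qdist X n1 n2 ∧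
      Paper.qdist X n1 n2 ≤ 2 * Paper.wdist X n1 n2) :=
  ⟨fun _ h1 _ _ hne => Paper.wdist_pos hX hXc (hN.1 h1).2 hne,
    fun a _ b _ => Paper.wdist_comm a b,
    fun a _ b _ c _ => Paper.wdist_le_max a b c,
    fun _ h1 _ h2 hne =>
      ⟨hN.mul_wdist_le_qdist hε.2 h1 h2 hne, Paper.qdist_le_two_mul_wdist hne⟩⟩
end

section
/- Let Z be a metric space, let X, Y ⊆ Z with X and Y nonempty, let ε ∈ (0, 1/2], and let N be an ε-Whitney net in Y with respect to X. Then the identity map Y/(Y ∩ (X ∪ N)) → (X ∪ Y)/(X ∪ N) is a surjective isometry; concretely: (i) for every y ∈ Y, d(y, Y ∩ (X ∪ N)) = d(y, X ∪ N), and (ii) for all y₁, y₂ ∈ Y, min{d(y₁,y₂), d(y₁, Y ∩ (X ∪ N)) + d(y₂, Y ∩ (X ∪ N))} = min{d(y₁,y₂), d(y₁, X ∪ N) + d(y₂, X ∪ N)}. -/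
open Metric Set

/-!
By maximality of the net, a point `y ∈ Y` outside `X ∪ N` cannot be added to `N`, so some
`u ∈ N` satisfies `d(y,u) < ε · max{d(y,X), d(u,X)}`; as `d(u,X) ≤ d(y,X) + d(y,u)` and
`ε ≤ 1/2`, this forces `d(y,u) ≤ d(y,X)`. Hence the points of `X` are never closer to `y`
than the nearest point of `N ⊆ Y`, and discarding `X \ Y` does not change `d(y, X ∪ N)`.
-/

namespace Paper

variable {Z : Type*} [MetricSpace Z] {ε : ℝ} {A B N : Set Z} {y u : Z}

theorem dist_le_infDist_of_dist_lt_mul_max (hε : ε ≤ 1 / 2)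
    (h : dist y u < ε * max (infDist y A) (infDist u A)) : dist y u ≤ infDist y A := by
  have hu : infDist u A ≤ infDist y A + dist y u := by
    simpa only [dist_comm] using infDist_le_infDist_add_dist (x := u) (y := y) (s := A)
  have hy : 0 ≤ infDist y A := infDist_nonneg
  rcases le_total (infDist u A) (infDist y A) with hle | hle
  · rw [max_eq_left hle] at h
    nlinarith [dist_nonneg (x := y) (y := u)]
  · rw [max_eq_right hle] at h
    nlinarith [dist_nonneg (x := y) (y := u)]

theorem IsWhitneyNet.exists_dist_lt_mul_max (hN : IsWhitneyNet ε A B N) (hyB : y ∈ B)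
    (hyA : y ∉ A) (hyN : y ∉ N) :
    ∃ u ∈ N, dist y u < ε * max (infDist y A) (infDist u A) := by
  obtain ⟨hsub, hsep, hmax⟩ := hN
  by_contra! hfar
  have hsep' : ∀ v ∈ insert y N, ∀ w ∈ insert y N, v ≠ w →
      ε * max (infDist v A) (infDist w A) ≤ dist v w := by
    rintro v (rfl | hv) w (rfl | hw) hvw
    · exact absurd rfl hvw
    · exact hfar w hw
    · rw [max_comm, dist_comm]
      exact hfar v hv
    · exact hsep v hv w hw hvw
  have hins := hmax (insert y N) (subset_insert y N)
    (insert_subset ⟨hyB, hyA⟩ hsub) hsep'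
  exact hyN (hins ▸ mem_insert y N)

theorem IsWhitneyNet.exists_dist_le_infDist (hN : IsWhitneyNet ε A B N) (hε : ε ≤ 1 / 2)
    (hyB : y ∈ B) (hyA : y ∉ A) (hyN : y ∉ N) : ∃ u ∈ N, dist y u ≤ infDist y A := by
  obtain ⟨u, huN, hu⟩ := hN.exists_dist_lt_mul_max hyB hyA hyN
  exact ⟨u, huN, dist_le_infDist_of_dist_lt_mul_max hε hu⟩

theorem IsWhitneyNet.infDist_inter_union_eq (hN : IsWhitneyNet ε A B N) (hε : ε ≤ 1 / 2)
    (hyB : y ∈ B) : infDist y (B ∩ (A ∪ N)) = infDist y (A ∪ N) := by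
  by_cases hy : y ∈ A ∪ N
  · rw [infDist_zero_of_mem (show y ∈ B ∩ (A ∪ N) from ⟨hyB, hy⟩), infDist_zero_of_mem hy]
  obtain ⟨u, huN, hu⟩ := hN.exists_dist_le_infDist hε hyB (fun h ↦ hy (.inl h))
    (fun h ↦ hy (.inr h))
  have huBAN : u ∈ B ∩ (A ∪ N) := ⟨(hN.1 huN).1, .inr huN⟩
  refine le_antisymm ((le_infDist ⟨u, .inr huN⟩).2 fun p hp ↦ ?_)
    (infDist_le_infDist_of_subset inter_subset_right ⟨u, huBAN⟩)
  rcases hp with hpA | hpN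
  · calc infDist y (B ∩ (A ∪ N)) ≤ dist y u := infDist_le_dist_of_mem huBAN
      _ ≤ infDist y A := hu
      _ ≤ dist y p := infDist_le_dist_of_mem hpA
  · exact infDist_le_dist_of_mem ⟨(hN.1 hpN).1, .inr hpN⟩

end Paper

theorem statement7_general (Z : Type*) [MetricSpace Z] (X Y : Set Z) (ε : ℝ)
    (hε : ε ∈ Set.Ioc (0 : ℝ) (1 / 2)) (N : Set Z)
    (hN : Paper.IsWhitneyNet ε X Y N) :
    (∀ y ∈ Y, Metric.infDist y (Y ∩ (X ∪ N)) = Metric.infDist y (X ∪ N)) ∧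
    (∀ y1 ∈ Y, ∀ y2 ∈ Y,
      min (dist y1 y2)
          (Metric.infDist y1 (Y ∩ (X ∪ N)) + Metric.infDist y2 (Y ∩ (X ∪ N))) =
      min (dist y1 y2)
          (Metric.infDist y1 (X ∪ N) + Metric.infDist y2 (X ∪ N))) := by
  have hdist : ∀ y ∈ Y, Metric.infDist y (Y ∩ (X ∪ N)) = Metric.infDist y (X ∪ N) :=
    fun y hy ↦ hN.infDist_inter_union_eq hε.2 hy
  exact ⟨hdist, fun y1 h1 y2 h2 ↦ by rw [hdist y1 h1, hdist y2 h2]⟩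

/-- For an `ε`-Whitney net `N` in `Y` with respect to `X`
(`ε ∈ (0,1/2]`), the identity map `Y/(Y ∩ (X ∪ N)) → (X ∪ Y)/(X ∪ N)` is a
surjective isometry, expressed concretely by (i) equality of the two distances to
the collapsed sets and (ii) equality of the two quotient distances on points of `Y`. -/
theorem statement7 (Z : Type*) [MetricSpace Z] (X Y : Set Z) (hX : X.Nonempty)
    (hY : Y.Nonempty) (ε : ℝ) (hε : ε ∈ Set.Ioc (0 : ℝ) (1 / 2)) (N : Set Z)
    (hN : Paper.IsWhitneyNet ε X Y N) :
    (∀ y ∈ Y, Metric.infDist y (Y ∩ (X ∪ N)) = Metric.infDist y (X ∪ N)) ∧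
    (∀ y1 ∈ Y, ∀ y2 ∈ Y,
      min (dist y1 y2)
          (Metric.infDist y1 (Y ∩ (X ∪ N)) + Metric.infDist y2 (Y ∩ (X ∪ N))) =
      min (dist y1 y2)
          (Metric.infDist y1 (X ∪ N) + Metric.infDist y2 (X ∪ N))) :=
  statement7_general Z X Y ε hε N hN
end

section
/- Let Z be a metric space and let X ⊆ Y ⊆ Z be closed subsets with X nonempty. Define ρ_X(a,b) := min{d(a,b), d(a,X) + d(b,X)} for a, b ∈ Z (the quotient distance of Z/X computed on representatives), and for a ∈ Z set ρ_X(a, Y) := inf_{y ∈ Y} ρ_X(a,y). Then for all a, b ∈ Z: min{d(a,b), d(a,Y) + d(b,Y)} = min{ρ_X(a,b), ρ_X(a,Y) + ρ_X(b,Y)}. That is, the natural identification between the metric quotients Z/Y and (Z/X)/(Y/X) is an isometry. -/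
/-!
Since `X ⊆ Y`, we have `d(a, Y) ≤ d(a, X)`. Hence the second branch `d(a, X) + d(y, X)` of
`ρ_X(a, y)` never undercuts `d(a, Y)` for `y ∈ Y`, so `ρ_X(a, Y) = d(a, Y)`; and for the same
reason the branch `d(a, X) + d(b, X)` of `ρ_X(a, b)` is dominated by `d(a, Y) + d(b, Y)`.
-/

open Metric Set

namespace Paper

variable {M : Type*} [MetricSpace M] {E F : Set M}

theorem infDist_le_qdist_of_subset (hEF : E ⊆ F) (hE : E.Nonempty) (a : M) {y : M}
    (hy : y ∈ F) : infDist a F ≤ qdist E a y :=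
  le_min (infDist_le_dist_of_mem hy)
    (le_add_of_le_of_nonneg (infDist_le_infDist_of_subset hEF hE) infDist_nonneg)

theorem isGLB_qdist_image_of_subset (hEF : E ⊆ F) (hE : E.Nonempty) (a : M) :
    IsGLB (qdist E a '' F) (infDist a F) := by
  constructor
  · rintro _ ⟨y, hy, rfl⟩
    exact infDist_le_qdist_of_subset hEF hE a hy
  · intro c hc
    refine (le_infDist (hE.mono hEF)).2 fun y hy => ?_
    exact (hc ⟨y, hy, rfl⟩).trans (min_le_left _ _)

theorem sInf_qdist_image_of_subset (hEF : E ⊆ F) (hE : E.Nonempty) (a : M) :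
    sInf (qdist E a '' F) = infDist a F :=
  (isGLB_qdist_image_of_subset hEF hE a).csInf_eq ((hE.mono hEF).image _)

end Paper

theorem statement8_general (Z : Type*) [MetricSpace Z] (X Y : Set Z) (hXY : X ⊆ Y)
    (hX : X.Nonempty) (a b : Z) :
    min (dist a b) (Metric.infDist a Y + Metric.infDist b Y) =
      min (Paper.qdist X a b)
        (sInf (Paper.qdist X a '' Y) + sInf (Paper.qdist X b '' Y)) := by
  rw [Paper.sInf_qdist_image_of_subset hXY hX, Paper.sInf_qdist_image_of_subset hXY hX,
    Paper.qdist, min_assoc]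
  have hsum_le : infDist a Y + infDist b Y ≤ infDist a X + infDist b X :=
    add_le_add (infDist_le_infDist_of_subset hXY hX) (infDist_le_infDist_of_subset hXY hX)
  rw [min_eq_right hsum_le]

/-- For closed subsets `X ⊆ Y ⊆ Z` with `X` nonempty, the natural
identification between `Z/Y` and `(Z/X)/(Y/X)` is an isometry: the quotient distance
by `Y` equals the quotient (by the image of `Y`) of the quotient distance by `X`.
Here `Paper.qdist X` is the quotient distance of `Z/X` on representatives and
`sInf ((Paper.qdist X a) '' Y)` is the `qdist X`-distance from `a` to `Y`. -/
theorem statement8 (Z : Type*) [MetricSpace Z] (X Y : Set Z) (hXY : X ⊆ Y)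
    (hX : X.Nonempty) (hXc : IsClosed X) (hYc : IsClosed Y) (a b : Z) :
    min (dist a b) (Metric.infDist a Y + Metric.infDist b Y) =
      min (Paper.qdist X a b)
        (sInf (Paper.qdist X a '' Y) + sInf (Paper.qdist X b '' Y)) :=
  statement8_general Z X Y hXY hX a b
end

section
/- Let f : X → Y be a map between metric spaces and suppose there exist Q > 0 and subsets A, B ⊆ X with X = A ∪ B such that the restriction of f to A is Q-light and the restriction of f to B is Q-light. Then f is (2Q(Q+2)+1)-light. -/
open Metric Set

/-!
Fix an `r`-chain in `f⁻¹(E)` with `diam E ≤ r`. Between two consecutive points of the chain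
lying in `A` the chain runs through `B`, and `B`-lightness bounds that stretch by `Q r`; hence the
points of the chain lying in `A`, taken in order, form a `(Q + 2) r`-chain in `A ∩ f⁻¹(E)`, of
diameter at most `Q (Q + 2) r` by `A`-lightness. Two arbitrary points of the chain, the first one
in `A` say, are joined through the last point in `A` before the second one, and the remaining
stretch lies in `B`, so their distance is at most `Q (Q + 2) r + (Q + 1) r`.
-/

namespace Paper

section lastIndexIn

open Classical

/-- The last index `m ∈ [p, k]` with `z m ∈ S` (junk value `0` if there is none). -/
noncomputable def lastIndexIn {X : Type*} (S : Set X) (z : ℕ → X) (p k : ℕ) : ℕ :=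
  Nat.findGreatest (fun m => p ≤ m ∧ z m ∈ S) k

variable {X : Type*} {S : Set X} {z : ℕ → X} {p k : ℕ}

theorem lastIndexIn_mem_Icc (hpk : p ≤ k) (hp : z p ∈ S) : lastIndexIn S z p k ∈ Icc p k :=
  ⟨Nat.le_findGreatest hpk ⟨le_rfl, hp⟩, Nat.findGreatest_le k⟩

theorem lastIndexIn_mem (hpk : p ≤ k) (hp : z p ∈ S) : z (lastIndexIn S z p k) ∈ S :=
  (Nat.findGreatest_spec (P := fun m => p ≤ m ∧ z m ∈ S) hpk ⟨le_rfl, hp⟩).2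

theorem notMem_of_mem_Ioc_lastIndexIn (hpk : p ≤ k) (hp : z p ∈ S) {m : ℕ}
    (hm : m ∈ Ioc (lastIndexIn S z p k) k) : z m ∉ S := fun hmS =>
  Nat.findGreatest_is_greatest hm.1 hm.2 ⟨(lastIndexIn_mem_Icc hpk hp).1.trans hm.1.le, hmS⟩

theorem lastIndexIn_of_mem (hpk : p ≤ k) (hk : z k ∈ S) : lastIndexIn S z p k = k :=
  Nat.findGreatest_eq ⟨hpk, hk⟩

theorem lastIndexIn_succ_of_notMem (hk : z (k + 1) ∉ S) :
    lastIndexIn S z p (k + 1) = lastIndexIn S z p k :=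
  Nat.findGreatest_of_not fun h => hk h.2

end lastIndexIn

variable {X Y : Type*} [MetricSpace X] [MetricSpace Y] {f : X → Y} {Q r : ℝ} {S T : Set X}
  {E : Set Y} {z : ℕ → X}

theorem IsLightOn.dist_le_of_nat_chain (h : IsLightOn Q f S) (hr : 0 < r) (hE : diam E ≤ r)
    (hfE : ∀ k, f (z k) ∈ E) {p q : ℕ} (hpq : p ≤ q) (hS : ∀ k ∈ Icc p q, z k ∈ S)
    (hstep : ∀ k ∈ Ico p q, dist (z k) (z (k + 1)) ≤ r) :
    dist (z p) (z q) ≤ Q * r := by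
  have := h r hr E hE (q - p) (fun t => z (p + t)) (fun t => hS _ ⟨by omega, by omega⟩)
    (fun t => hfE _) (fun t => by simpa [add_assoc] using hstep (p + t) ⟨by omega, by omega⟩)
    0 (Fin.last _)
  simpa [Nat.add_sub_cancel' hpq] using this

theorem IsLightOn.dist_le_of_mem_Ioc (h : IsLightOn Q f T) (hQ : 0 ≤ Q) (hr : 0 < r)
    (hE : diam E ≤ r) (hfE : ∀ k, f (z k) ∈ E) (hstep : ∀ k, dist (z k) (z (k + 1)) ≤ r)
    {p q : ℕ} (hpq : p ≤ q) (hT : ∀ k ∈ Ioc p q, z k ∈ T) :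
    dist (z p) (z q) ≤ (Q + 1) * r := by
  rcases hpq.eq_or_lt with rfl | hpq
  · rw [dist_self]; positivity
  calc dist (z p) (z q) ≤ dist (z p) (z (p + 1)) + dist (z (p + 1)) (z q) := dist_triangle _ _ _
    _ ≤ r + Q * r := add_le_add (hstep p) <| h.dist_le_of_nat_chain hr hE hfE hpq
        (fun k hk => hT k ⟨hk.1, hk.2⟩) fun k _ => hstep k
    _ = (Q + 1) * r := by ring

theorem dist_le_of_isLightOn_of_mem_of_mem (hS : IsLightOn Q f S) (hT : IsLightOn Q f T)
    (hQ : 0 ≤ Q) (hr : 0 < r) (hE : diam E ≤ r) (hfE : ∀ k, f (z k) ∈ E)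
    (hstep : ∀ k, dist (z k) (z (k + 1)) ≤ r) (hcov : ∀ k, z k ∈ S ∪ T) {p q : ℕ} (hpq : p ≤ q)
    (hp : z p ∈ S) (hq : z q ∈ S) :
    dist (z p) (z q) ≤ Q * ((Q + 2) * r) := by
  set σ := lastIndexIn S z p
  have hσ_step : ∀ k ∈ Ico p q, dist (z (σ k)) (z (σ (k + 1))) ≤ (Q + 2) * r := by
    intro k hk
    by_cases hk1 : z (k + 1) ∈ S
    · rw [show σ (k + 1) = k + 1 from lastIndexIn_of_mem (hk.1.trans k.le_succ) hk1]
      have hgap : ∀ m ∈ Ioc (σ k) k, z m ∈ T := fun m hm =>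
        (hcov m).resolve_left (notMem_of_mem_Ioc_lastIndexIn hk.1 hp hm)
      calc dist (z (σ k)) (z (k + 1)) ≤ dist (z (σ k)) (z k) + dist (z k) (z (k + 1)) :=
            dist_triangle _ _ _
        _ ≤ (Q + 1) * r + r := add_le_add
            (hT.dist_le_of_mem_Ioc hQ hr hE hfE hstep (lastIndexIn_mem_Icc hk.1 hp).2 hgap)
            (hstep k)
        _ = (Q + 2) * r := by ring
    · rw [show σ (k + 1) = σ k from lastIndexIn_succ_of_notMem hk1, dist_self]
      positivity
  have := hS.dist_le_of_nat_chain (z := z ∘ σ) (r := (Q + 2) * r) (by positivity)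
    (hE.trans (le_mul_of_one_le_left hr.le (by linarith))) (fun k => hfE _) hpq
    (fun k hk => lastIndexIn_mem hk.1 hp) hσ_step
  simpa [σ, lastIndexIn_of_mem le_rfl hp, lastIndexIn_of_mem hpq hq] using this

theorem dist_le_of_isLightOn_of_mem (hS : IsLightOn Q f S) (hT : IsLightOn Q f T)
    (hQ : 0 ≤ Q) (hr : 0 < r) (hE : diam E ≤ r) (hfE : ∀ k, f (z k) ∈ E)
    (hstep : ∀ k, dist (z k) (z (k + 1)) ≤ r) (hcov : ∀ k, z k ∈ S ∪ T) {p q : ℕ} (hpq : p ≤ q)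
    (hp : z p ∈ S) :
    dist (z p) (z q) ≤ (2 * Q * (Q + 2) + 1) * r := by
  set k := lastIndexIn S z p q
  have hk := lastIndexIn_mem_Icc hpq hp
  have hgap : ∀ m ∈ Ioc k q, z m ∈ T := fun m hm =>
    (hcov m).resolve_left (notMem_of_mem_Ioc_lastIndexIn hpq hp hm)
  calc dist (z p) (z q) ≤ dist (z p) (z k) + dist (z k) (z q) := dist_triangle _ _ _
    _ ≤ Q * ((Q + 2) * r) + (Q + 1) * r := add_le_add
        (dist_le_of_isLightOn_of_mem_of_mem hS hT hQ hr hE hfE hstep hcov hk.1 hp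
          (lastIndexIn_mem hpq hp))
        (hT.dist_le_of_mem_Ioc hQ hr hE hfE hstep hk.2 hgap)
    _ ≤ (2 * Q * (Q + 2) + 1) * r := by
        nlinarith [mul_nonneg (mul_nonneg hQ (by linarith : (0 : ℝ) ≤ Q + 1)) hr.le]

end Paper

/-- If `X = A ∪ B` and the restrictions of `f` to `A` and to `B`
are both `Q`-light, then `f` is `(2Q(Q+2)+1)`-light. -/
theorem statement12 (X Y : Type*) [MetricSpace X] [MetricSpace Y] (f : X → Y)
    (Q : ℝ) (hQ : 0 < Q) (A B : Set X) (hAB : A ∪ B = Set.univ)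
    (hA : Paper.IsLightOn Q f A) (hB : Paper.IsLightOn Q f B) :
    Paper.IsLight (2 * Q * (Q + 2) + 1) f := by
  intro r hr E hE n z _ hfE hstep
  set w : ℕ → X := fun k => z ⟨min k n, by omega⟩
  have hw : ∀ i : Fin (n + 1), w i = z i := fun i =>
    congrArg z (Fin.ext (min_eq_left (Nat.lt_succ_iff.mp i.2)))
  have hwstep : ∀ k, dist (w k) (w (k + 1)) ≤ r := by
    intro k
    rcases lt_or_ge k n with hk | hk
    · simpa [w, min_eq_left hk.le, min_eq_left (Nat.succ_le_of_lt hk)] using hstep ⟨k, hk⟩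
    · simpa [w, min_eq_right hk, min_eq_right (hk.trans k.le_succ)] using hr.le
  have hcov : ∀ k, w k ∈ A ∪ B := fun k => hAB ▸ mem_univ _
  have hordered : ∀ i j : Fin (n + 1), i ≤ j → dist (z i) (z j) ≤ (2 * Q * (Q + 2) + 1) * r := by
    intro i j hij
    rw [← hw i, ← hw j]
    rcases hcov i with hiA | hiB
    · exact Paper.dist_le_of_isLightOn_of_mem hA hB hQ.le hr hE (fun k => hfE _) hwstep hcov
        hij hiA
    · exact Paper.dist_le_of_isLightOn_of_mem hB hA hQ.le hr hE (fun k => hfE _) hwstep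
        (fun k => Or.symm (hcov k)) hij hiB
  intro i j
  rcases le_total i j with hij | hji
  · exact hordered i j hij
  · rw [dist_comm]
    exact hordered j i hji
end
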